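/- arXiv:2410.15434 — 4 statements merged into one kernel-verified Lean document; each statement's English description precedes it below -/
import Mathlib

section
/- The number of permutations of {1,...,n} with no valleys (i.e., no index ℓ with 2 ≤ ℓ ≤ n−1 such that π(ℓ−1) > π(ℓ) < π(ℓ+1)) is 2^(n−1) for all n ≥ 1. -/
open Finset

/-- `ℓ` is a valley of `π`: `2 ≤ ℓ ≤ n-1` (1-based) with `π(ℓ-1) > π(ℓ) < π(ℓ+1)`. -/
def IsValley {n : ℕ} (π : Equiv.Perm (Fin n)) (ℓ : Fin n) : Prop :=
  1 ≤ ℓ.val ∧ ∃ h2 : ℓ.val + 1 < n,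
    π ⟨ℓ.val - 1, lt_of_le_of_lt (Nat.sub_le _ _) ℓ.isLt⟩ > π ℓ ∧ π ℓ < π ⟨ℓ.val + 1, h2⟩

/-- number of valleys of `π` -/
noncomputable def valCount {n : ℕ} (π : Equiv.Perm (Fin n)) : ℕ :=
  {ℓ : Fin n | IsValley π ℓ}.ncard

/-- `ℓ` is a peak of `π`. -/
def IsPeak {n : ℕ} (π : Equiv.Perm (Fin n)) (ℓ : Fin n) : Prop :=
  1 ≤ ℓ.val ∧ ∃ h2 : ℓ.val + 1 < n,
    π ⟨ℓ.val - 1, lt_of_le_of_lt (Nat.sub_le _ _) ℓ.isLt⟩ < π ℓ ∧ π ℓ > π ⟨ℓ.val + 1, h2⟩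

/-- number of peaks of `π` -/
noncomputable def peakCount {n : ℕ} (π : Equiv.Perm (Fin n)) : ℕ :=
  {ℓ : Fin n | IsPeak π ℓ}.ncard

/-- number of descents of `π` -/
noncomputable def desCount {n : ℕ} (π : Equiv.Perm (Fin n)) : ℕ :=
  {ℓ : Fin n | ∃ h : ℓ.val + 1 < n, π ⟨ℓ.val + 1, h⟩ < π ℓ}.ncard

/-- `π` is increasing: the values at its valleys, from left to right, strictly increase. -/
def Increasing {n : ℕ} (π : Equiv.Perm (Fin n)) : Prop :=
  ∀ i j : Fin n, IsValley π i → IsValley π j → i < j → π i < π j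

/-- `ℓ` is the first position of a (maximal increasing) run of `π`. -/
def IsRunStart {n : ℕ} (π : Equiv.Perm (Fin n)) (ℓ : Fin n) : Prop :=
  ℓ.val = 0 ∨ π ⟨ℓ.val - 1, lt_of_le_of_lt (Nat.sub_le _ _) ℓ.isLt⟩ > π ℓ

/-- number of (maximal increasing) runs of `π` -/
noncomputable def runCount {n : ℕ} (π : Equiv.Perm (Fin n)) : ℕ :=
  {ℓ : Fin n | IsRunStart π ℓ}.ncard

/-- `π` is flattened: the first entries of its runs, from left to right, increase. -/
def Flattened {n : ℕ} (π : Equiv.Perm (Fin n)) : Prop :=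
  ∀ i j : Fin n, IsRunStart π i → IsRunStart π j → i < j → π i < π j

/-- `π i` is a right-to-left minimum of `π`. -/
def IsRLMin {n : ℕ} (π : Equiv.Perm (Fin n)) (i : Fin n) : Prop :=
  ∀ j : Fin n, i < j → π i < π j

/-- number of right-to-left minima of `π` -/
noncomputable def rlmCount {n : ℕ} (π : Equiv.Perm (Fin n)) : ℕ :=
  {i : Fin n | IsRLMin π i}.ncard

namespace ValleyAux

lemma mk_eq {n a b : ℕ} (ha : a < n) (hb : b < n) (h : a = b) :
    (⟨a, ha⟩ : Fin n) = ⟨b, hb⟩ := by subst h; rfl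

def ext0 {n : ℕ} (σ : Equiv.Perm (Fin (n+1))) : Equiv.Perm (Fin (n+2)) where
  toFun := Fin.cases 0 (fun i => (σ i).succ)
  invFun := Fin.cases 0 (fun i => (σ.symm i).succ)
  left_inv x := by cases x using Fin.cases <;> simp
  right_inv x := by cases x using Fin.cases <;> simp

@[simp] lemma ext0_zero {n : ℕ} (σ : Equiv.Perm (Fin (n+1))) : ext0 σ 0 = 0 := rfl

@[simp] lemma ext0_succ {n : ℕ} (σ : Equiv.Perm (Fin (n+1))) (i : Fin (n+1)) :
    ext0 σ i.succ = (σ i).succ := by simp [ext0]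

lemma ext0_mk {n : ℕ} (σ : Equiv.Perm (Fin (n+1))) (a : ℕ) (h : a + 1 < n + 2) :
    ext0 σ ⟨a+1, h⟩ = (σ ⟨a, by omega⟩).succ := by
  have : (⟨a+1, h⟩ : Fin (n+2)) = Fin.succ ⟨a, by omega⟩ := rfl
  rw [this, ext0_succ]

def extLast {n : ℕ} (σ : Equiv.Perm (Fin (n+1))) : Equiv.Perm (Fin (n+2)) where
  toFun := Fin.lastCases 0 (fun i => (σ i).succ)
  invFun := Fin.cases (Fin.last (n+1)) (fun j => (σ.symm j).castSucc)
  left_inv x := by cases x using Fin.lastCases <;> simp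
  right_inv x := by cases x using Fin.cases <;> simp

@[simp] lemma extLast_last {n : ℕ} (σ : Equiv.Perm (Fin (n+1))) :
    extLast σ (Fin.last (n+1)) = 0 := by simp [extLast]

@[simp] lemma extLast_castSucc {n : ℕ} (σ : Equiv.Perm (Fin (n+1))) (i : Fin (n+1)) :
    extLast σ i.castSucc = (σ i).succ := by simp [extLast]

lemma extLast_mk {n : ℕ} (σ : Equiv.Perm (Fin (n+1))) (a : ℕ) (h : a < n + 1)
    (h' : a < n + 2) :
    extLast σ ⟨a, h'⟩ = (σ ⟨a, h⟩).succ := by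
  have : (⟨a, h'⟩ : Fin (n+2)) = Fin.castSucc ⟨a, h⟩ := rfl
  rw [this, extLast_castSucc]

lemma ext0_lt_iff {n : ℕ} (σ : Equiv.Perm (Fin (n+1))) {a b : ℕ}
    (ha1 : 1 ≤ a) (ha2 : a < n+2) (hb1 : 1 ≤ b) (hb2 : b < n+2) :
    ext0 σ ⟨a, ha2⟩ < ext0 σ ⟨b, hb2⟩ ↔
      σ ⟨a-1, by omega⟩ < σ ⟨b-1, by omega⟩ := by
  rw [mk_eq (b := (a-1)+1) ha2 (by omega) (by omega),
    mk_eq (b := (b-1)+1) hb2 (by omega) (by omega),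
    ext0_mk σ (a-1), ext0_mk σ (b-1), Fin.succ_lt_succ_iff]

lemma extLast_lt_iff {n : ℕ} (σ : Equiv.Perm (Fin (n+1))) {a b : ℕ}
    (ha : a < n+1) (hb : b < n+1) (ha' : a < n+2) (hb' : b < n+2) :
    extLast σ ⟨a, ha'⟩ < extLast σ ⟨b, hb'⟩ ↔ σ ⟨a, ha⟩ < σ ⟨b, hb⟩ := by
  rw [extLast_mk σ a ha, extLast_mk σ b hb, Fin.succ_lt_succ_iff]

set_option maxHeartbeats 1000000 in
lemma valley_ext0_of {n : ℕ} {σ : Equiv.Perm (Fin (n+1))} {ℓ : Fin (n+1)}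
    (h : IsValley σ ℓ) : IsValley (ext0 σ) ⟨ℓ.val + 1, by omega⟩ := by
  obtain ⟨l, hl⟩ := ℓ
  obtain ⟨h1, h2, ha, hb⟩ := h
  have h1' : 1 ≤ l := h1
  have h2' : l + 1 < n + 1 := h2
  have ha' : σ ⟨l - 1, by omega⟩ > σ ⟨l, hl⟩ := ha
  have hb' : σ ⟨l, hl⟩ < σ ⟨l + 1, h2'⟩ := hb
  refine ⟨by show 1 ≤ l + 1; omega, by show l + 1 + 1 < n + 2; omega, ?_, ?_⟩
  · show ext0 σ ⟨l + 1 - 1, by omega⟩ > ext0 σ ⟨l + 1, by omega⟩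
    refine (ext0_lt_iff σ (by omega) (by omega) (by omega) (by omega)).mpr ?_
    exact ha'
  · show ext0 σ ⟨l + 1, by omega⟩ < ext0 σ ⟨l + 1 + 1, by omega⟩
    refine (ext0_lt_iff σ (by omega) (by omega) (by omega) (by omega)).mpr ?_
    exact hb'

set_option maxHeartbeats 1000000 in
lemma valley_of_ext0 {n : ℕ} {σ : Equiv.Perm (Fin (n+1))} {ℓ : Fin (n+2)}
    (h : IsValley (ext0 σ) ℓ) : ∃ ℓ', IsValley σ ℓ' := by
  obtain ⟨l, hl⟩ := ℓ
  obtain ⟨h1, h2, ha, hb⟩ := h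
  have h1' : 1 ≤ l := h1
  have h2' : l + 1 < n + 2 := h2
  have ha' : ext0 σ ⟨l - 1, by omega⟩ > ext0 σ ⟨l, hl⟩ := ha
  have hb' : ext0 σ ⟨l, hl⟩ < ext0 σ ⟨l + 1, h2'⟩ := hb
  rcases Nat.lt_or_ge l 2 with hc | hc
  · exfalso
    have hl1 : l = 1 := by omega
    subst hl1
    rw [show (⟨1 - 1, by omega⟩ : Fin (n+2)) = 0 from rfl, ext0_zero] at ha'
    exact absurd ha' (Fin.not_lt_zero _)
  · refine ⟨⟨l - 1, by omega⟩, by show 1 ≤ l - 1; omega,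
      by show l - 1 + 1 < n + 1; omega, ?_, ?_⟩
    · show σ ⟨l - 1 - 1, by omega⟩ > σ ⟨l - 1, by omega⟩
      have := (ext0_lt_iff σ (by omega) hl (by omega) (by omega)).mp ha'
      exact this
    · show σ ⟨l - 1, by omega⟩ < σ ⟨l - 1 + 1, by omega⟩
      have := (ext0_lt_iff σ (by omega) hl (by omega) h2').mp hb'
      rw [mk_eq (a := l - 1 + 1) (b := l + 1 - 1) (by omega) (by omega) (by omega)]
      exact this

set_option maxHeartbeats 1000000 in
lemma valley_extLast_of {n : ℕ} {σ : Equiv.Perm (Fin (n+1))} {ℓ : Fin (n+1)}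
    (h : IsValley σ ℓ) : IsValley (extLast σ) ⟨ℓ.val, by omega⟩ := by
  obtain ⟨l, hl⟩ := ℓ
  obtain ⟨h1, h2, ha, hb⟩ := h
  have h1' : 1 ≤ l := h1
  have h2' : l + 1 < n + 1 := h2
  have ha' : σ ⟨l - 1, by omega⟩ > σ ⟨l, hl⟩ := ha
  have hb' : σ ⟨l, hl⟩ < σ ⟨l + 1, h2'⟩ := hb
  refine ⟨by show 1 ≤ l; omega, by show l + 1 < n + 2; omega, ?_, ?_⟩
  · show extLast σ ⟨l - 1, by omega⟩ > extLast σ ⟨l, by omega⟩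
    refine (extLast_lt_iff σ hl (by omega) (by omega) (by omega)).mpr ?_
    exact ha'
  · show extLast σ ⟨l, by omega⟩ < extLast σ ⟨l + 1, by omega⟩
    refine (extLast_lt_iff σ hl h2' (by omega) (by omega)).mpr ?_
    exact hb'

set_option maxHeartbeats 1000000 in
lemma valley_of_extLast {n : ℕ} {σ : Equiv.Perm (Fin (n+1))} {ℓ : Fin (n+2)}
    (h : IsValley (extLast σ) ℓ) : ∃ ℓ', IsValley σ ℓ' := by
  obtain ⟨l, hl⟩ := ℓ
  obtain ⟨h1, h2, ha, hb⟩ := h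
  have h1' : 1 ≤ l := h1
  have h2' : l + 1 < n + 2 := h2
  have ha' : extLast σ ⟨l - 1, by omega⟩ > extLast σ ⟨l, hl⟩ := ha
  have hb' : extLast σ ⟨l, hl⟩ < extLast σ ⟨l + 1, h2'⟩ := hb
  rcases Nat.lt_or_ge (l+1) (n+1) with hc | hc
  · refine ⟨⟨l, by omega⟩, by show 1 ≤ l; omega, by show l + 1 < n + 1; omega, ?_, ?_⟩
    · show σ ⟨l - 1, by omega⟩ > σ ⟨l, by omega⟩
      have := (extLast_lt_iff σ (by omega) (by omega) hl (by omega)).mp ha'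
      exact this
    · show σ ⟨l, by omega⟩ < σ ⟨l + 1, by omega⟩
      have := (extLast_lt_iff σ (by omega) (by omega) hl h2').mp hb'
      exact this
  · exfalso
    rw [show (⟨l + 1, h2'⟩ : Fin (n+2)) = Fin.last (n+1) from mk_eq _ _ (by omega),
      extLast_last] at hb'
    exact absurd hb' (Fin.not_lt_zero _)

def shrink0 {n : ℕ} (π : Equiv.Perm (Fin (n+2))) (h : π 0 = 0) :
    Equiv.Perm (Fin (n+1)) where
  toFun i := (π i.succ).pred (by
    intro hh
    exact Fin.succ_ne_zero i (π.injective (hh.trans h.symm)))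
  invFun j := (π.symm j.succ).pred (by
    intro hh
    apply Fin.succ_ne_zero j
    have := congrArg π hh
    rwa [Equiv.apply_symm_apply, h] at this)
  left_inv i := by simp
  right_inv j := by simp

lemma ext0_shrink0 {n : ℕ} (π : Equiv.Perm (Fin (n+2))) (h : π 0 = 0) :
    ext0 (shrink0 π h) = π := by
  apply Equiv.ext
  intro x
  cases x using Fin.cases with
  | zero => rw [ext0_zero, h]
  | succ i => rw [ext0_succ]; simp [shrink0]

def shrinkLast {n : ℕ} (π : Equiv.Perm (Fin (n+2))) (h : π (Fin.last (n+1)) = 0) :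
    Equiv.Perm (Fin (n+1)) where
  toFun i := (π i.castSucc).pred (by
    intro hh
    have : i.castSucc = Fin.last (n+1) := π.injective (hh.trans h.symm)
    exact absurd this (Fin.castSucc_lt_last i).ne)
  invFun j := (π.symm j.succ).castPred (by
    intro hh
    apply Fin.succ_ne_zero j
    have := congrArg π hh
    rwa [Equiv.apply_symm_apply, h] at this)
  left_inv i := by simp
  right_inv j := by simp

lemma extLast_shrinkLast {n : ℕ} (π : Equiv.Perm (Fin (n+2)))
    (h : π (Fin.last (n+1)) = 0) : extLast (shrinkLast π h) = π := by
  apply Equiv.ext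
  intro x
  cases x using Fin.lastCases with
  | last => rw [extLast_last, h]
  | cast i => rw [extLast_castSucc]; simp [shrinkLast]

lemma zero_end {n : ℕ} (π : Equiv.Perm (Fin (n+2))) (hv : ∀ ℓ, ¬ IsValley π ℓ) :
    π 0 = 0 ∨ π (Fin.last (n+1)) = 0 := by
  by_contra hc
  push_neg at hc
  obtain ⟨hc0, hcl⟩ := hc
  have hπp : π (π.symm 0) = 0 := π.apply_symm_apply 0
  have hp0 : π.symm 0 ≠ 0 := by
    intro e; rw [e] at hπp; exact hc0 hπp
  have hpl : π.symm 0 ≠ Fin.last (n+1) := by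
    intro e; rw [e] at hπp; exact hcl hπp
  have h1 : 1 ≤ (π.symm 0).val := by
    rcases Nat.eq_zero_or_pos (π.symm 0).val with e | e
    · exact absurd (Fin.ext e) hp0
    · omega
  have h2 : (π.symm 0).val + 1 < n + 2 := by
    have hlt := (π.symm 0).isLt
    have : (π.symm 0).val ≠ n + 1 := fun e => hpl (Fin.ext e)
    omega
  apply hv (π.symm 0)
  refine ⟨h1, h2, ?_, ?_⟩
  · rw [hπp]
    apply Fin.pos_of_ne_zero
    intro e
    have he := π.injective (e.trans hπp.symm)
    have := congrArg Fin.val he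
    simp only at this
    omega
  · rw [hπp]
    apply Fin.pos_of_ne_zero
    intro e
    have he := π.injective (e.trans hπp.symm)
    have := congrArg Fin.val he
    simp only at this
    omega

lemma ext0_inj {k : ℕ} : Function.Injective (ext0 (n := k)) := by
  intro σ τ h
  apply Equiv.ext
  intro i
  have h2 := congrArg (fun (e : Equiv.Perm (Fin (k+2))) => e i.succ) h
  simp only [ext0_succ] at h2
  exact Fin.succ_injective _ h2

lemma extLast_inj {k : ℕ} : Function.Injective (extLast (n := k)) := by
  intro σ τ h
  apply Equiv.ext
  intro i
  have h2 := congrArg (fun (e : Equiv.Perm (Fin (k+2))) => e i.castSucc) h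
  simp only [extLast_castSucc] at h2
  exact Fin.succ_injective _ h2

lemma step_eq (k : ℕ) :
    {π : Equiv.Perm (Fin (k+2)) | ∀ ℓ, ¬ IsValley π ℓ} =
      ext0 '' {σ : Equiv.Perm (Fin (k+1)) | ∀ ℓ, ¬ IsValley σ ℓ} ∪
      extLast '' {σ : Equiv.Perm (Fin (k+1)) | ∀ ℓ, ¬ IsValley σ ℓ} := by
  ext π
  simp only [Set.mem_setOf_eq, Set.mem_union, Set.mem_image]
  constructor
  · intro hπ
    rcases zero_end π hπ with h | h
    · left
      refine ⟨shrink0 π h, ?_, ext0_shrink0 π h⟩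
      intro ℓ hℓ
      have hv := valley_ext0_of hℓ
      rw [ext0_shrink0 π h] at hv
      exact hπ _ hv
    · right
      refine ⟨shrinkLast π h, ?_, extLast_shrinkLast π h⟩
      intro ℓ hℓ
      have hv := valley_extLast_of hℓ
      rw [extLast_shrinkLast π h] at hv
      exact hπ _ hv
  · rintro (⟨σ, hσ, rfl⟩ | ⟨σ, hσ, rfl⟩) ℓ hℓ
    · obtain ⟨ℓ', hℓ'⟩ := valley_of_ext0 hℓ; exact hσ _ hℓ'
    · obtain ⟨ℓ', hℓ'⟩ := valley_of_extLast hℓ; exact hσ _ hℓ'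

lemma step_disj (k : ℕ) :
    Disjoint (ext0 '' {σ : Equiv.Perm (Fin (k+1)) | ∀ ℓ, ¬ IsValley σ ℓ})
      (extLast '' {σ : Equiv.Perm (Fin (k+1)) | ∀ ℓ, ¬ IsValley σ ℓ}) := by
  rw [Set.disjoint_left]
  rintro π ⟨σ, -, rfl⟩ ⟨τ, -, heq⟩
  have h0 : extLast τ 0 = (τ 0).succ := by
    rw [show (0 : Fin (k+2)) = Fin.castSucc 0 from rfl, extLast_castSucc]
  rw [heq] at h0
  rw [ext0_zero] at h0
  exact Fin.succ_ne_zero (τ 0) h0.symm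

lemma main (m : ℕ) :
    {π : Equiv.Perm (Fin (m+1)) | ∀ ℓ, ¬ IsValley π ℓ}.ncard = 2 ^ m := by
  induction m with
  | zero =>
    have he : {π : Equiv.Perm (Fin 1) | ∀ ℓ, ¬ IsValley π ℓ} = Set.univ := by
      ext π
      simp only [Set.mem_setOf_eq, Set.mem_univ, iff_true]
      rintro ℓ ⟨-, h2, -⟩
      omega
    rw [he, Set.ncard_univ]
    simp [Nat.card_eq_fintype_card]
  | succ k ih =>
    rw [step_eq k,
      Set.ncard_union_eq (step_disj k) (Set.toFinite _) (Set.toFinite _),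
      Set.ncard_image_of_injective _ ext0_inj,
      Set.ncard_image_of_injective _ extLast_inj, ih]
    ring

end ValleyAux

theorem valleyless_count (n : ℕ) (hn : 1 ≤ n) :
    {π : Equiv.Perm (Fin n) | ∀ ℓ : Fin n, ¬ IsValley π ℓ}.ncard = 2 ^ (n - 1) := by
  obtain ⟨m, rfl⟩ : ∃ m, n = m + 1 := ⟨n - 1, by omega⟩
  simpa using ValleyAux.main m
end

section
/- For n ≥ 3, the number of increasing permutations of {1,...,n} with exactly one valley equals 2^(n−2) · (2^(n−1) − n). -/
open Finset

/-!
A permutation with exactly one valley (it is then trivially increasing) rises, falls to its valley,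
rises again and falls again. It is determined by three sets of values: the set `L` of values up to
and including the valley, the falling run `B` that ends in the valley, and the rising run `C` that
starts right after it, because each of the four monotone runs is the sorted list of its values.
A triple `(L, B, C)` arises in this way exactly when `B ⊆ L`, `C ⊆ Lᶜ`, `#B ≥ 2`, `C ≠ ∅`,
`max L ∈ B`, `max Lᶜ ∈ C` and `min B < min C`.

Fix the height `m` of the valley and the set `L`. Then `B` ranges over the sets between
`{m, max L}` and `L ∩ [m, n]`, and `C` over the sets between `{max Lᶜ}` and `Lᶜ ∩ (m, n]`,
independently, which gives `2 ^ (n - m - 2)` triples, provided `m ∈ L` and both `L` and `Lᶜ`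
contain values above `m`. There are `2 ^ (m - 1) * (2 ^ (n - m) - 2)` such sets `L`, and summing
`2 ^ (n - 3) * (2 ^ (n - m) - 2)` over `m` gives `2 ^ (n - 2) * (2 ^ (n - 1) - n)`.
-/

section Sequence

variable {α : Type*} [LinearOrder α] {f : ℕ → α}

def IsValleyAt (f : ℕ → α) (k : ℕ) : Prop :=
  0 < k ∧ f k < f (k - 1) ∧ f k < f (k + 1)

theorem Function.Injective.lt_succ_iff_not_succ_lt (hf : Function.Injective f) (i : ℕ) :
    f i < f (i + 1) ↔ ¬ f (i + 1) < f i :=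
  (not_lt.trans (hf.ne (Nat.succ_ne_self i).symm).le_iff_lt).symm

theorem exists_isValleyAt_of_descent_of_ascent (hf : Function.Injective f) {i j : ℕ}
    (hi : f (i + 1) < f i) (hj : f j < f (j + 1)) (hij : i < j) :
    ∃ k, i < k ∧ k ≤ j ∧ IsValleyAt f k := by
  induction j, hij using Nat.le_induction with
  | base => exact ⟨i + 1, by omega, le_rfl, by omega, by simpa using hi, hj⟩
  | succ j hij ih =>
    by_cases h : f (j + 1) < f j
    · exact ⟨j + 1, by omega, le_rfl, by omega, by simpa using h, hj⟩
    · obtain ⟨k, hik, hkj, hk⟩ := ih ((hf.lt_succ_iff_not_succ_lt j).2 h)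
      exact ⟨k, hik, by omega, hk⟩

/-- On the positions `0, …, N - 1`, `f` rises up to `a`, falls down to the valley `v`, rises up
to `c` and falls from there on. -/
structure HasOneValleyShape (f : ℕ → α) (N a v c : ℕ) : Prop where
  lt_valley : a < v
  valley_lt : v < c
  lt_length : c < N
  descent_iff : ∀ i, i + 1 < N → (f (i + 1) < f i ↔ a ≤ i ∧ i < v ∨ c ≤ i)

namespace HasOneValleyShape

variable {N a v c : ℕ}

theorem isValleyAt_iff (hf : Function.Injective f) (h : HasOneValleyShape f N a v c) {k : ℕ}
    (hk : k + 1 < N) : IsValleyAt f k ↔ k = v := by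
  have := h.lt_valley
  have := h.valley_lt
  constructor
  · rintro ⟨hk0, hdesc, hasc⟩
    have := (h.descent_iff (k - 1) (by omega)).1 (by rwa [Nat.sub_add_cancel hk0])
    have := mt (h.descent_iff k hk).2 ((hf.lt_succ_iff_not_succ_lt k).1 hasc)
    omega
  · rintro rfl
    refine ⟨by omega, ?_, (hf.lt_succ_iff_not_succ_lt k).2 fun hd => ?_⟩
    · have := (h.descent_iff (k - 1) (by omega)).2 (by omega)
      rwa [Nat.sub_add_cancel (by omega)] at this
    · have := (h.descent_iff k hk).1 hd
      omega

theorem unique {a' v' c' : ℕ} (h : HasOneValleyShape f N a v c)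
    (h' : HasOneValleyShape f N a' v' c') : a = a' ∧ v = v' ∧ c = c' := by
  have same i (hi : i + 1 < N) := (h.descent_iff i hi).symm.trans (h'.descent_iff i hi)
  have := h.lt_valley; have := h.valley_lt; have := h.lt_length
  have := h'.lt_valley; have := h'.valley_lt; have := h'.lt_length
  have := same a; have := same a'; have := same (v - 1); have := same (v' - 1)
  have := same v; have := same v'; have := same c; have := same c'
  have := same (c - 1); have := same (c' - 1)
  omega

theorem strictMonoOn_Icc (hf : Function.Injective f) (h : HasOneValleyShape f N a v c)
    {l r : ℕ} (hr : r < N) (hasc : ∀ i, l ≤ i → i < r → ¬ (a ≤ i ∧ i < v ∨ c ≤ i)) :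
    StrictMonoOn f (Set.Icc l r) :=
  strictMonoOn_of_lt_succ Set.ordConnected_Icc fun i _ hi hi' => by
    simp only [Order.succ_eq_add_one, Set.mem_Icc] at hi hi' ⊢
    exact (hf.lt_succ_iff_not_succ_lt i).2
      (mt (h.descent_iff i (by omega)).1 (hasc i hi.1 (by omega)))

theorem strictAntiOn_Icc (h : HasOneValleyShape f N a v c) {l r : ℕ} (hr : r < N)
    (hdesc : ∀ i, l ≤ i → i < r → a ≤ i ∧ i < v ∨ c ≤ i) : StrictAntiOn f (Set.Icc l r) :=
  strictAntiOn_of_succ_lt Set.ordConnected_Icc fun i _ hi hi' => by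
    simp only [Order.succ_eq_add_one, Set.mem_Icc] at hi hi' ⊢
    exact (h.descent_iff i (by omega)).2 (hdesc i hi.1 (by omega))

theorem monotone_runs (hf : Function.Injective f) (h : HasOneValleyShape f N a v c) :
    StrictMonoOn f (Set.Icc 0 a) ∧ StrictAntiOn f (Set.Icc a v) ∧
      StrictMonoOn f (Set.Icc v c) ∧ StrictAntiOn f (Set.Icc c (N - 1)) := by
  have := h.lt_valley
  have := h.valley_lt
  have := h.lt_length
  exact ⟨h.strictMonoOn_Icc hf (by omega) (by omega), h.strictAntiOn_Icc (by omega) (by omega),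
    h.strictMonoOn_Icc hf (by omega) (by omega), h.strictAntiOn_Icc (by omega) (by omega)⟩

end HasOneValleyShape

/-- A descent before an ascent encloses a valley, so a single valley forces the descents to form
the two intervals of `HasOneValleyShape`. -/
theorem exists_hasOneValleyShape (hf : Function.Injective f) {N v : ℕ} (hv : IsValleyAt f v)
    (hvN : v + 1 < N) (huniq : ∀ k, k + 1 < N → IsValleyAt f k → k = v) :
    ∃ a c, HasOneValleyShape f N a v c := by
  have straddle {i j} (hi : f (i + 1) < f i) (hj : f j < f (j + 1)) (hij : i < j)
      (hjN : j + 1 < N) : i < v ∧ v ≤ j := by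
    obtain ⟨k, hik, hkj, hk⟩ := exists_isValleyAt_of_descent_of_ascent hf hi hj hij
    have := huniq k (by omega) hk
    omega
  obtain ⟨hv0, hvdesc, hvasc⟩ := hv
  have hdesc : ∃ i, f (i + 1) < f i := ⟨v - 1, by rwa [Nat.sub_add_cancel hv0]⟩
  have hpeak : ∃ c, v < c ∧ (c + 1 < N → f (c + 1) < f c) := ⟨N - 1, by omega, by omega⟩
  classical
  have ha := Nat.find_spec hdesc
  have hav : Nat.find hdesc < v := by
    have := Nat.find_min' hdesc (m := v - 1) (by rwa [Nat.sub_add_cancel hv0]); omega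
  obtain ⟨hvc, hc⟩ := Nat.find_spec hpeak
  have hcN : Nat.find hpeak < N := by
    have := Nat.find_min' hpeak (m := N - 1) ⟨by omega, by omega⟩; omega
  refine ⟨Nat.find hdesc, Nat.find hpeak, hav, hvc, hcN, fun i hi => ⟨fun hd => ?_, ?_⟩⟩
  · by_contra hout
    have : Nat.find hdesc ≤ i := Nat.find_min' hdesc hd
    rcases (show i = v ∨ v < i ∧ i < Nat.find hpeak by omega) with rfl | hvi
    · exact lt_asymm hd hvasc
    · exact Nat.find_min hpeak hvi.2 ⟨hvi.1, fun _ => hd⟩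
  · rintro (⟨hai, hiv⟩ | hci)
    · by_contra hd
      have hai' : Nat.find hdesc < i := lt_of_le_of_ne hai fun he => hd (he ▸ ha)
      have := straddle ha ((hf.lt_succ_iff_not_succ_lt i).2 hd) hai' hi
      omega
    · by_contra hd
      have hci' : Nat.find hpeak < i := lt_of_le_of_ne hci fun he => hd (he ▸ hc (by omega))
      have := straddle (hc (by omega)) ((hf.lt_succ_iff_not_succ_lt i).2 hd) hci' hi
      omega

end Sequence

section Perm

variable {n : ℕ}

/-- Fixing the positions `i ≥ n` lets us speak of `π (i + 1)` without bound proofs. -/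
def extendNat (π : Equiv.Perm (Fin n)) : Equiv.Perm ℕ :=
  π.extendDomain Fin.equivSubtype

theorem extendNat_apply (π : Equiv.Perm (Fin n)) {i : ℕ} (hi : i < n) :
    extendNat π i = π ⟨i, hi⟩ := by
  rw [extendNat, Equiv.Perm.extendDomain_apply_subtype π Fin.equivSubtype (b := i) hi]
  rfl

theorem isValley_iff_isValleyAt (π : Equiv.Perm (Fin n)) (ℓ : Fin n) :
    IsValley π ℓ ↔ ℓ.val + 1 < n ∧ IsValleyAt (extendNat π) ℓ := by
  unfold IsValley IsValleyAt
  constructor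
  · rintro ⟨h1, h2, hl, hr⟩
    refine ⟨h2, by omega, ?_, ?_⟩
    · rw [extendNat_apply _ ℓ.2, extendNat_apply _ (by omega)]; exact hl
    · rw [extendNat_apply _ ℓ.2, extendNat_apply _ h2]; exact hr
  · rintro ⟨h2, h1, hl, hr⟩
    refine ⟨h1, h2, ?_, ?_⟩
    · rw [extendNat_apply _ ℓ.2, extendNat_apply _ (by omega)] at hl; exact hl
    · rw [extendNat_apply _ ℓ.2, extendNat_apply _ h2] at hr; exact hr

theorem existsUnique_isValley_iff (π : Equiv.Perm (Fin n)) :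
    (∃! ℓ, IsValley π ℓ) ↔ ∃ a v c, HasOneValleyShape (extendNat π) n a v c := by
  simp only [isValley_iff_isValleyAt]
  constructor
  · rintro ⟨ℓ, ⟨hℓn, hℓ⟩, huniq⟩
    obtain ⟨a, c, h⟩ := exists_hasOneValleyShape (extendNat π).injective hℓ hℓn
      fun k hk hvk => congrArg Fin.val (huniq ⟨k, by omega⟩ ⟨hk, hvk⟩)
    exact ⟨a, ℓ, c, h⟩
  · rintro ⟨a, v, c, h⟩
    have hv : v + 1 < n := by have := h.valley_lt; have := h.lt_length; omega
    refine ⟨⟨v, by omega⟩, ⟨hv, (h.isValleyAt_iff (extendNat π).injective hv).2 rfl⟩, ?_⟩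
    rintro ℓ ⟨hℓ, hvℓ⟩
    exact Fin.ext ((h.isValleyAt_iff (extendNat π).injective hℓ).1 hvℓ)

theorem increasing_and_valCount_eq_one_iff (π : Equiv.Perm (Fin n)) :
    Increasing π ∧ valCount π = 1 ↔ ∃! ℓ, IsValley π ℓ := by
  rw [valCount, Set.ncard_eq_one]
  constructor
  · rintro ⟨-, ℓ, hℓ⟩
    exact ⟨ℓ, Set.eq_singleton_iff_unique_mem.1 hℓ⟩
  · rintro ⟨ℓ, hℓ, huniq⟩
    refine ⟨fun i j hi hj hij => absurd hij ?_, ℓ, Set.eq_singleton_iff_unique_mem.2 ⟨hℓ, huniq⟩⟩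
    rw [huniq i hi, huniq j hj]
    exact lt_irrefl ℓ

end Perm

section Lists

variable {α : Type*} [LinearOrder α]

theorem Finset.le_getElem_sort_of_mem {X : Finset α} {x : α} (hx : x ∈ X) {j : ℕ}
    (hj : j + 1 = #X) (h : j < X.sort.length) : x ≤ X.sort[j] := by
  obtain ⟨k, hk, rfl⟩ := List.mem_iff_getElem.1 ((Finset.mem_sort (· ≤ ·)).2 hx)
  rw [Finset.length_sort] at hk
  exact (Finset.sortedLT_sort X).getElem_le_getElem_iff.2 (by omega)

theorem Finset.getElem_sort_le_of_mem {X : Finset α} {x : α} (hx : x ∈ X) {j : ℕ} (hj : j = 0)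
    (h : j < X.sort.length) : X.sort[j] ≤ x := by
  obtain ⟨k, hk, rfl⟩ := List.mem_iff_getElem.1 ((Finset.mem_sort (· ≤ ·)).2 hx)
  exact (Finset.sortedLT_sort X).getElem_le_getElem_iff.2 (by omega)

theorem Finset.getElem_sort_mem {X : Finset α} {j : ℕ} (h : j < X.sort.length) :
    X.sort[j] ∈ X :=
  (Finset.mem_sort (· ≤ ·)).1 (List.getElem_mem h)

theorem List.SortedLT.sort_toFinset_eq {l : List α} (h : l.SortedLT) : l.toFinset.sort = l :=
  (List.toFinset_sort _ h.nodup).2 h.sortedLE.pairwise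

theorem List.SortedGT.sort_toFinset_eq {l : List α} (h : l.SortedGT) :
    l.toFinset.sort = l.reverse := by
  rw [← List.toFinset_reverse]
  exact (List.sortedLT_reverse.2 h).sort_toFinset_eq

theorem List.toFinset_append_sdiff_cancel_left {l₁ l₂ : List α} (h : (l₁ ++ l₂).Nodup) :
    (l₁ ++ l₂).toFinset \ l₁.toFinset = l₂.toFinset := by
  rw [List.toFinset_append, Finset.union_sdiff_cancel_left]
  exact List.disjoint_toFinset_iff_disjoint.2 (List.disjoint_of_nodup_append h)

theorem List.toFinset_append_sdiff_cancel_right {l₁ l₂ : List α} (h : (l₁ ++ l₂).Nodup) :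
    (l₁ ++ l₂).toFinset \ l₂.toFinset = l₁.toFinset := by
  rw [List.toFinset_append, Finset.union_sdiff_cancel_right]
  exact List.disjoint_toFinset_iff_disjoint.2 (List.disjoint_of_nodup_append h)

theorem List.compl_toFinset_of_nodup_append [Fintype α] {l₁ l₂ : List α}
    (h : (l₁ ++ l₂).Nodup) (hall : ∀ x, x ∈ l₁ ++ l₂) : l₁.toFinsetᶜ = l₂.toFinset := by
  ext x
  rw [Finset.mem_compl, List.mem_toFinset, List.mem_toFinset]
  exact ⟨(List.mem_append.1 (hall x)).resolve_left,
    fun hx hx₁ => List.disjoint_of_nodup_append h hx₁ hx⟩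

theorem List.extract_append_extract {β : Type*} (w : List β) {l m r : ℕ} (hlm : l ≤ m)
    (hmr : m ≤ r) : w.extract l m ++ w.extract m r = w.extract l r := by
  simp only [List.extract_eq_take_drop]
  rw [show r - l = (m - l) + (r - m) by omega, List.take_add, List.drop_drop,
    Nat.add_sub_cancel' hlm]

end Lists

section BlockWord

variable {α : Type*} [LinearOrder α] {A B C E : Finset α}

theorem card_pos_of_forall_exists {β : Type*} {X Y : Finset β} {r : β → β → Prop}
    (h : ∀ x ∈ X, ∃ y ∈ Y, r x y) (hX : 0 < #X) : 0 < #Y := by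
  obtain ⟨x, hx⟩ := Finset.card_pos.1 hX
  obtain ⟨y, hy, -⟩ := h x hx
  exact Finset.card_pos.2 ⟨y, hy⟩

def blockWord (A B C E : Finset α) : List α :=
  A.sort ++ B.sort.reverse ++ C.sort ++ E.sort.reverse

@[simp]
theorem length_blockWord : (blockWord A B C E).length = #A + #B + #C + #E := by
  simp [blockWord, add_assoc]

theorem blockWord_descent_iff (hAB : ∀ x ∈ A, ∃ y ∈ B, x < y) (hBC : ∀ z ∈ C, ∃ y ∈ B, y < z)
    (hEC : ∀ x ∈ E, ∃ z ∈ C, x < z) {i : ℕ} (hi : i + 1 < (blockWord A B C E).length) :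
    (blockWord A B C E)[i + 1] < (blockWord A B C E)[i] ↔
      #A ≤ i ∧ i + 1 < #A + #B ∨ #A + #B + #C ≤ i + 1 := by
  simp only [length_blockWord] at hi
  simp only [blockWord, List.getElem_append, List.length_append, List.getElem_reverse,
    Finset.length_sort, List.length_reverse]
  have := card_pos_of_forall_exists hAB
  have := card_pos_of_forall_exists hBC
  have := card_pos_of_forall_exists hEC
  split_ifs
  all_goals try omega
  all_goals try (rw [(Finset.sortedLT_sort _).getElem_lt_getElem_iff]; omega)
  -- what is left are the three junctions between consecutive runs
  · obtain ⟨y, hy, hxy⟩ := hAB _ (Finset.getElem_sort_mem _)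
    exact iff_of_false
      (not_lt.2 (hxy.trans_le (Finset.le_getElem_sort_of_mem hy (by omega) _)).le) (by omega)
  · obtain ⟨y, hy, hyz⟩ := hBC _ (Finset.getElem_sort_mem _)
    exact iff_of_false
      (not_lt.2 ((Finset.getElem_sort_le_of_mem hy (by omega) _).trans_lt hyz).le) (by omega)
  · obtain ⟨z, hz, hxz⟩ := hEC _ (Finset.getElem_sort_mem _)
    exact iff_of_true (hxz.trans_le (Finset.le_getElem_sort_of_mem hz (by omega) _)) (by omega)

theorem blockWord_inj {A' B' C' E' : Finset α} (h : blockWord A B C E = blockWord A' B' C' E')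
    (hA : #A = #A') (hB : #B = #B') (hC : #C = #C') : A = A' ∧ B = B' ∧ C = C' ∧ E = E' := by
  obtain ⟨h, hE⟩ := List.append_inj h (by simp [hA, hB, hC])
  obtain ⟨h, hC⟩ := List.append_inj h (by simp [hA, hB])
  obtain ⟨hA, hB⟩ := List.append_inj h (by simp [hA])
  rw [List.reverse_inj] at hB hE
  exact ⟨by simpa using congrArg List.toFinset hA, by simpa using congrArg List.toFinset hB,
    by simpa using congrArg List.toFinset hC, by simpa using congrArg List.toFinset hE⟩

theorem blockWord_toFinset {l₁ l₂ l₃ l₄ : List α} (h₁ : l₁.SortedLT) (h₂ : l₂.SortedGT)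
    (h₃ : l₃.SortedLT) (h₄ : l₄.SortedGT) :
    blockWord l₁.toFinset l₂.toFinset l₃.toFinset l₄.toFinset = l₁ ++ l₂ ++ l₃ ++ l₄ := by
  simp only [blockWord, h₁.sort_toFinset_eq, h₂.sort_toFinset_eq, h₃.sort_toFinset_eq,
    h₄.sort_toFinset_eq, List.reverse_reverse]

end BlockWord

section ValleyTriple

variable {α : Type*} [LinearOrder α] [Fintype α]

/-- The data of a permutation with a single valley: `L` is the set of values up to and including
the valley, `B` the falling run ending in the valley, `C` the rising run right after it. -/
structure IsValleyTriple (L B C : Finset α) : Prop where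
  subset_left : B ⊆ L
  subset_compl : C ⊆ Lᶜ
  two_le_card : 2 ≤ #B
  nonempty : C.Nonempty
  peak_left : ∀ x ∈ L \ B, ∃ y ∈ B, x < y
  valley : ∀ z ∈ C, ∃ y ∈ B, y < z
  peak_right : ∀ x ∈ Lᶜ \ C, ∃ z ∈ C, x < z

def tripleWord (L B C : Finset α) : List α :=
  blockWord (L \ B) B C (Lᶜ \ C)

variable {L B C : Finset α}

theorem mem_tripleWord (x : α) : x ∈ tripleWord L B C := by
  simp only [tripleWord, blockWord, List.mem_append, List.mem_reverse, Finset.mem_sort,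
    Finset.mem_sdiff, Finset.mem_compl]
  tauto

theorem length_tripleWord (hB : B ⊆ L) (hC : C ⊆ Lᶜ) :
    (tripleWord L B C).length = Fintype.card α := by
  have := Finset.card_sdiff_add_card_eq_card hB
  have := Finset.card_sdiff_add_card_eq_card hC
  have := Finset.card_add_card_compl L
  simp only [tripleWord, length_blockWord]
  omega

end ValleyTriple

section PermOfList

variable {n : ℕ}

noncomputable def permOfList (w : List (Fin n)) (hlen : w.length = n) (hmem : ∀ x, x ∈ w) :
    Equiv.Perm (Fin n) :=
  Equiv.ofBijective (fun i => w[i.val]) <| Finite.surjective_iff_bijective.1 fun x => by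
    obtain ⟨k, hk, rfl⟩ := List.getElem_of_mem (hmem x)
    exact ⟨⟨k, hlen ▸ hk⟩, rfl⟩

variable {w : List (Fin n)} {hlen : w.length = n} {hmem : ∀ x, x ∈ w}

theorem ofFn_permOfList : List.ofFn (permOfList w hlen hmem) = w :=
  List.ext_getElem (by simp [hlen]) fun _ _ _ => by simp [permOfList]

theorem extendNat_permOfList {i : ℕ} (hi : i < n) :
    extendNat (permOfList w hlen hmem) i = w[i] := by
  simp [extendNat_apply _ hi, permOfList]

end PermOfList

section Extract

variable {n : ℕ} {π : Equiv.Perm (Fin n)} {l r : ℕ}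

theorem exists_of_mem_extract_ofFn {x : Fin n} (hx : x ∈ (List.ofFn π).extract l r) :
    ∃ i, l ≤ i ∧ i < r ∧ (x : ℕ) = extendNat π i := by
  obtain ⟨j, hj, rfl⟩ := List.getElem_of_mem hx
  simp only [List.extract_eq_take_drop, List.length_take, List.length_drop, List.length_ofFn]
    at hj
  refine ⟨l + j, by omega, by omega, ?_⟩
  rw [extendNat_apply _ (by omega)]
  simp

theorem mem_extract_ofFn {i : ℕ} (hli : l ≤ i) (hir : i < r) (hin : i < n) :
    π ⟨i, hin⟩ ∈ (List.ofFn π).extract l r := by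
  rw [List.mem_iff_getElem]
  refine ⟨i - l, ?_, ?_⟩
  · simp only [List.extract_eq_take_drop, List.length_take, List.length_drop, List.length_ofFn,
      lt_inf_iff]
    omega
  simp [Nat.add_sub_cancel' hli]

theorem sortedLT_extract_ofFn (h : StrictMonoOn (extendNat π) (Set.Ico l r)) :
    ((List.ofFn π).extract l r).SortedLT := by
  refine List.sortedLT_iff_getElem_lt_getElem_of_lt.2 fun i j hi hj hij => ?_
  simp only [List.extract_eq_take_drop, List.length_take, List.length_drop, List.length_ofFn]
    at hi hj
  simp only [List.extract_eq_take_drop, List.getElem_take, List.getElem_drop, List.getElem_ofFn]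
  rw [Fin.lt_def, ← extendNat_apply, ← extendNat_apply]
  exact h ⟨by omega, by omega⟩ ⟨by omega, by omega⟩ (by omega)

theorem sortedGT_extract_ofFn (h : StrictAntiOn (extendNat π) (Set.Ico l r)) :
    ((List.ofFn π).extract l r).SortedGT := by
  refine List.sortedGT_iff_getElem_gt_getElem_of_lt.2 fun i j hi hj hij => ?_
  simp only [List.extract_eq_take_drop, List.length_take, List.length_drop, List.length_ofFn]
    at hi hj
  simp only [List.extract_eq_take_drop, List.getElem_take, List.getElem_drop, List.getElem_ofFn]
  rw [Fin.lt_def, ← extendNat_apply, ← extendNat_apply]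
  exact h ⟨by omega, by omega⟩ ⟨by omega, by omega⟩ (by omega)

end Extract

namespace IsValleyTriple

variable {n : ℕ} {L B C : Finset (Fin n)}

noncomputable def perm (h : IsValleyTriple L B C) : Equiv.Perm (Fin n) :=
  permOfList (tripleWord L B C) (by rw [length_tripleWord h.subset_left h.subset_compl,
    Fintype.card_fin]) mem_tripleWord

theorem hasOneValleyShape (h : IsValleyTriple L B C) :
    HasOneValleyShape (extendNat h.perm) n #(L \ B) (#L - 1) (#L + #C - 1) := by
  have hlen := length_tripleWord h.subset_left h.subset_compl
  have hLB := Finset.card_sdiff_add_card_eq_card h.subset_left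
  have hLC := Finset.card_le_card h.subset_compl
  have hcompl := Finset.card_add_card_compl L
  have := h.two_le_card
  have := h.nonempty.card_pos
  simp only [Fintype.card_fin] at hlen hcompl
  refine ⟨by omega, by omega, by omega, fun i hi => ?_⟩
  simp only [perm]
  rw [extendNat_permOfList hi, extendNat_permOfList (by omega), Fin.val_fin_lt]
  simp only [tripleWord]
  rw [blockWord_descent_iff h.peak_left h.valley h.peak_right]
  omega

theorem eq_of_perm_eq {L' B' C' : Finset (Fin n)} (h : IsValleyTriple L B C)
    (h' : IsValleyTriple L' B' C') (he : h.perm = h'.perm) : L = L' ∧ B = B' ∧ C = C' := by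
  obtain ⟨hA, hv, hc⟩ := h.hasOneValleyShape.unique (he ▸ h'.hasOneValleyShape)
  have := h.two_le_card
  have := h'.two_le_card
  have := Finset.card_le_card h.subset_left
  have := Finset.card_le_card h'.subset_left
  have hw : tripleWord L B C = tripleWord L' B' C' := by
    simpa only [perm, ofFn_permOfList] using
      congrArg (fun π : Equiv.Perm (Fin n) => List.ofFn π) he
  have := Finset.card_sdiff_of_subset h.subset_left
  have := Finset.card_sdiff_of_subset h'.subset_left
  obtain ⟨hA, hB, hC, -⟩ := blockWord_inj hw hA (by omega) (by omega)
  refine ⟨?_, hB, hC⟩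
  rw [← Finset.sdiff_union_of_subset h.subset_left, ← Finset.sdiff_union_of_subset h'.subset_left,
    hA, hB]

end IsValleyTriple

section FourRuns

variable {α : Type*} [LinearOrder α] [Fintype α] {l₁ l₂ l₃ l₄ : List α}

theorem isValleyTriple_toFinset (hnd : (l₁ ++ l₂ ++ (l₃ ++ l₄)).Nodup)
    (hall : ∀ x, x ∈ l₁ ++ l₂ ++ (l₃ ++ l₄)) (h₂ : 2 ≤ l₂.length) (h₃ : l₃ ≠ [])
    (h₁₂ : ∀ x ∈ l₁, ∃ y ∈ l₂, x < y) (h₃₂ : ∀ z ∈ l₃, ∃ y ∈ l₂, y < z)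
    (h₄₃ : ∀ x ∈ l₄, ∃ z ∈ l₃, x < z) :
    IsValleyTriple (l₁ ++ l₂).toFinset l₂.toFinset l₃.toFinset := by
  have hcompl := List.compl_toFinset_of_nodup_append hnd hall
  have hA := List.toFinset_append_sdiff_cancel_right (List.nodup_append.1 hnd).1
  have hE : (l₁ ++ l₂).toFinsetᶜ \ l₃.toFinset = l₄.toFinset := by
    rw [hcompl, List.toFinset_append_sdiff_cancel_left (List.nodup_append.1 hnd).2.1]
  refine ⟨by simp only [List.toFinset_append, Finset.subset_union_right],
    hcompl ▸ by simp only [List.toFinset_append, Finset.subset_union_left], ?_, ?_,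
    hA ▸ by simpa using h₁₂, by simpa using h₃₂, hE ▸ by simpa using h₄₃⟩
  · rwa [List.toFinset_card_of_nodup (List.nodup_append.1 (List.nodup_append.1 hnd).1).2.1]
  · simpa [List.toFinset_nonempty_iff] using h₃

theorem tripleWord_toFinset (hnd : (l₁ ++ l₂ ++ (l₃ ++ l₄)).Nodup)
    (hall : ∀ x, x ∈ l₁ ++ l₂ ++ (l₃ ++ l₄)) (h₁ : l₁.SortedLT) (h₂ : l₂.SortedGT)
    (h₃ : l₃.SortedLT) (h₄ : l₄.SortedGT) :
    tripleWord (l₁ ++ l₂).toFinset l₂.toFinset l₃.toFinset = l₁ ++ l₂ ++ l₃ ++ l₄ := by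
  rw [tripleWord, List.toFinset_append_sdiff_cancel_right (List.nodup_append.1 hnd).1,
    List.compl_toFinset_of_nodup_append hnd hall,
    List.toFinset_append_sdiff_cancel_left (List.nodup_append.1 hnd).2.1,
    blockWord_toFinset h₁ h₂ h₃ h₄]

end FourRuns

/-- Cut `π` into its four monotone runs; their sets of values form the triple. -/
theorem HasOneValleyShape.exists_isValleyTriple_perm_eq {n a v c : ℕ} {π : Equiv.Perm (Fin n)}
    (h : HasOneValleyShape (extendNat π) n a v c) :
    ∃ L B C : Finset (Fin n), ∃ hT : IsValleyTriple L B C, hT.perm = π := by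
  have ⟨hav, hvc, hcn, _⟩ := h
  obtain ⟨inc₁, dec₂, inc₃, dec₄⟩ := h.monotone_runs (extendNat π).injective
  set w := List.ofFn π
  set s₁ := w.extract 0 a
  set s₂ := w.extract a (v + 1)
  set s₃ := w.extract (v + 1) (c + 1)
  set s₄ := w.extract (c + 1) n
  have hw : w = s₁ ++ s₂ ++ s₃ ++ s₄ := by
    rw [w.extract_append_extract (by omega) (by omega),
      w.extract_append_extract (by omega) (by omega),
      w.extract_append_extract (by omega) (by omega)]
    simp [w]
  have hnd : (s₁ ++ s₂ ++ (s₃ ++ s₄)).Nodup := by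
    rw [← List.append_assoc, ← hw]; exact List.nodup_ofFn.2 π.injective
  have hall (x : Fin n) : x ∈ s₁ ++ s₂ ++ (s₃ ++ s₄) := by
    rw [← List.append_assoc, ← hw]; exact List.mem_ofFn.2 (π.surjective x)
  have h₂ : 2 ≤ s₂.length := by
    simp only [s₂, w, List.extract_eq_take_drop, List.length_take, List.length_drop,
      List.length_ofFn, le_inf_iff]
    omega
  have hT := isValleyTriple_toFinset hnd hall h₂
    (List.ne_nil_of_mem (mem_extract_ofFn (i := c) (by omega) (by omega) (by omega)))
    (fun x hx => ⟨_, mem_extract_ofFn (i := a) le_rfl (by omega) (by omega), by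
      obtain ⟨i, -, hi, hx⟩ := exists_of_mem_extract_ofFn hx
      rw [Fin.lt_def, hx, ← extendNat_apply]
      exact inc₁ ⟨by omega, by omega⟩ ⟨by omega, le_rfl⟩ hi⟩)
    (fun z hz => ⟨_, mem_extract_ofFn (i := v) (by omega) (by omega) (by omega), by
      obtain ⟨i, hi, hic, hz⟩ := exists_of_mem_extract_ofFn hz
      rw [Fin.lt_def, hz, ← extendNat_apply]
      exact inc₃ ⟨le_rfl, by omega⟩ ⟨by omega, by omega⟩ (by omega)⟩)
    (fun x hx => ⟨_, mem_extract_ofFn (i := c) (by omega) (by omega) (by omega), by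
      obtain ⟨i, hi, hin, hx⟩ := exists_of_mem_extract_ofFn hx
      rw [Fin.lt_def, hx, ← extendNat_apply]
      exact dec₄ ⟨le_rfl, by omega⟩ ⟨by omega, by omega⟩ (by omega)⟩)
  refine ⟨_, _, _, hT, Equiv.coe_fn_injective (List.ofFn_injective ?_)⟩
  rw [IsValleyTriple.perm, ofFn_permOfList, tripleWord_toFinset hnd hall
    (sortedLT_extract_ofFn (inc₁.mono fun i hi => ⟨hi.1, by grind⟩))
    (sortedGT_extract_ofFn (dec₂.mono fun i hi => ⟨hi.1, by grind⟩))
    (sortedLT_extract_ofFn (inc₃.mono fun i hi => ⟨by grind, by grind⟩))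
    (sortedGT_extract_ofFn (dec₄.mono fun i hi => ⟨by grind, by grind⟩)), ← hw]

theorem ncard_existsUnique_isValley (n : ℕ) :
    {π : Equiv.Perm (Fin n) | ∃! ℓ, IsValley π ℓ}.ncard =
      {T : Finset (Fin n) × Finset (Fin n) × Finset (Fin n) |
        IsValleyTriple T.1 T.2.1 T.2.2}.ncard := by
  symm
  refine Set.ncard_congr (fun T hT => IsValleyTriple.perm hT) (fun T hT => ?_)
    (fun T T' hT hT' he => ?_) (fun π hπ => ?_)
  · exact (existsUnique_isValley_iff _).2 ⟨_, _, _, IsValleyTriple.hasOneValleyShape hT⟩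
  · obtain ⟨h₁, h₂, h₃⟩ := IsValleyTriple.eq_of_perm_eq hT hT' he
    exact Prod.ext h₁ (Prod.ext h₂ h₃)
  · obtain ⟨a, v, c, h⟩ := (existsUnique_isValley_iff π).1 hπ
    obtain ⟨L, B, C, hT, rfl⟩ := h.exists_isValleyTriple_perm_eq
    exact ⟨(L, B, C), hT, rfl⟩

section Count

open scoped Classical

variable {n : ℕ} {L B C : Finset (Fin n)} {m : Fin n}

/-- `L` can be the left part of a valley triple whose valley has height `m`. -/
structure IsValleySplit (m : Fin n) (L : Finset (Fin n)) : Prop where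
  mem : m ∈ L
  nonempty_inter : (Ioi m ∩ L).Nonempty
  nonempty_sdiff : (Ioi m \ L).Nonempty

theorem IsValleyTriple.isValleySplit (h : IsValleyTriple L B C) (hm : B.min = m) :
    IsValleySplit m L := by
  have hmB := Finset.mem_of_min hm
  have hle : ∀ y ∈ B, m ≤ y := fun y hy => WithTop.coe_le_coe.1 (hm ▸ Finset.min_le hy)
  obtain ⟨y, hy, hym⟩ := Finset.exists_mem_ne (s := B) (by have := h.two_le_card; omega) m
  obtain ⟨z, hz⟩ := h.nonempty
  obtain ⟨x, hx, hxz⟩ := h.valley z hz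
  refine ⟨h.subset_left hmB, ⟨y, Finset.mem_inter.2 ⟨Finset.mem_Ioi.2
    (lt_of_le_of_ne (hle y hy) (Ne.symm hym)), h.subset_left hy⟩⟩, ⟨z, Finset.mem_sdiff.2
    ⟨Finset.mem_Ioi.2 ((hle x hx).trans_lt hxz), Finset.mem_compl.1 (h.subset_compl hz)⟩⟩⟩

namespace IsValleySplit

theorem nonempty (h : IsValleySplit m L) : L.Nonempty := ⟨m, h.mem⟩

theorem nonempty_compl (h : IsValleySplit m L) : Lᶜ.Nonempty :=
  h.nonempty_sdiff.imp fun _ hx => Finset.mem_compl.2 (Finset.mem_sdiff.1 hx).2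

theorem lt_max' (h : IsValleySplit m L) : m < L.max' h.nonempty := by
  obtain ⟨y, hy⟩ := h.nonempty_inter
  rw [Finset.mem_inter, Finset.mem_Ioi] at hy
  exact hy.1.trans_le (L.le_max' y hy.2)

theorem lt_max'_compl (h : IsValleySplit m L) : m < Lᶜ.max' h.nonempty_compl := by
  obtain ⟨z, hz⟩ := h.nonempty_sdiff
  rw [Finset.mem_sdiff, Finset.mem_Ioi] at hz
  exact hz.1.trans_le (Lᶜ.le_max' z (Finset.mem_compl.2 hz.2))

end IsValleySplit

theorem isValleyTriple_and_min_eq_iff (h : IsValleySplit m L) :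
    IsValleyTriple L B C ∧ B.min = m ↔
      B ∈ Icc {m, L.max' h.nonempty} (Ici m ∩ L) ∧
        C ∈ Icc {Lᶜ.max' h.nonempty_compl} (Ioi m \ L) := by
  have hmM := h.lt_max'
  set M := L.max' _
  set M' := Lᶜ.max' _
  simp only [Finset.mem_Icc, Finset.insert_subset_iff, Finset.singleton_subset_iff,
    Finset.subset_inter_iff, Finset.subset_sdiff]
  constructor
  · rintro ⟨hT, hmin⟩
    have hle : ∀ y ∈ B, m ≤ y := fun y hy => WithTop.coe_le_coe.1 (hmin ▸ Finset.min_le hy)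
    refine ⟨⟨⟨Finset.mem_of_min hmin, ?_⟩, fun x hx => Finset.mem_Ici.2 (hle x hx),
      hT.subset_left⟩, ⟨?_, fun x hx => ?_,
      Finset.disjoint_left.2 fun x hx => Finset.mem_compl.1 (hT.subset_compl hx)⟩⟩
    · by_contra hMB
      obtain ⟨y, hy, hMy⟩ := hT.peak_left M (Finset.mem_sdiff.2 ⟨L.max'_mem _, hMB⟩)
      exact (L.le_max' y (hT.subset_left hy)).not_gt hMy
    · by_contra hMC
      obtain ⟨y, hy, hMy⟩ := hT.peak_right M' (Finset.mem_sdiff.2 ⟨Lᶜ.max'_mem _, hMC⟩)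
      exact (Lᶜ.le_max' y (hT.subset_compl hy)).not_gt hMy
    · obtain ⟨y, hy, hyx⟩ := hT.valley x hx
      exact Finset.mem_Ioi.2 ((hle y hy).trans_lt hyx)
  · rintro ⟨⟨⟨hmB, hMB⟩, hBm, hBL⟩, ⟨hM'C, hCm, hCL⟩⟩
    refine ⟨⟨hBL, fun x hx => Finset.mem_compl.2 (Finset.disjoint_left.1 hCL hx), ?_,
      ⟨M', hM'C⟩, fun x hx => ⟨M, hMB, ?_⟩, fun x hx => ⟨m, hmB, Finset.mem_Ioi.1 (hCm hx)⟩,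
      fun x hx => ⟨M', hM'C, ?_⟩⟩, ?_⟩
    · calc 2 = #{m, M} := (Finset.card_pair hmM.ne).symm
        _ ≤ #B := Finset.card_le_card (Finset.insert_subset hmB (Finset.singleton_subset_iff.2 hMB))
    · obtain ⟨hxL, hxB⟩ := Finset.mem_sdiff.1 hx
      exact lt_of_le_of_ne (L.le_max' x hxL) fun h => hxB (h ▸ hMB)
    · obtain ⟨hxL, hxC⟩ := Finset.mem_sdiff.1 hx
      exact lt_of_le_of_ne (Lᶜ.le_max' x hxL) fun h => hxC (h ▸ hM'C)
    · exact le_antisymm (Finset.min_le hmB)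
        (Finset.le_min fun y hy => WithTop.coe_le_coe.2 (Finset.mem_Ici.1 (hBm hy)))

noncomputable def valleyTriples (n : ℕ) :
    Finset (Finset (Fin n) × Finset (Fin n) × Finset (Fin n)) :=
  {T | IsValleyTriple T.1 T.2.1 T.2.2}

theorem coe_valleyTriples :
    (valleyTriples n : Set (Finset (Fin n) × Finset (Fin n) × Finset (Fin n))) =
      {T | IsValleyTriple T.1 T.2.1 T.2.2} := by
  ext
  simp [valleyTriples]

theorem card_valleyTriples_fiber (m : Fin n) (L : Finset (Fin n)) :
    #{T ∈ valleyTriples n | T.2.1.min = (m : WithTop (Fin n)) ∧ T.1 = L} =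
      if IsValleySplit m L then 2 ^ (n - 3 - m) else 0 := by
  split_ifs with h
  · have hIci : #(Ici m ∩ L) = #(Ioi m ∩ L) + 1 := by
      rw [← Finset.Ioi_insert, Finset.insert_inter_of_mem h.mem,
        Finset.card_insert_of_notMem (by simp)]
    have hIoi := Finset.card_inter_add_card_sdiff (Ioi m) L
    rw [Fin.card_Ioi] at hIoi
    have := h.nonempty_inter.card_pos
    have := h.nonempty_sdiff.card_pos
    calc #{T ∈ valleyTriples n | T.2.1.min = (m : WithTop (Fin n)) ∧ T.1 = L}
        = #(Icc {m, L.max' h.nonempty} (Ici m ∩ L) ×ˢ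
            Icc {Lᶜ.max' h.nonempty_compl} (Ioi m \ L)) := by
          refine Finset.card_nbij' (fun T => T.2) (fun p => (L, p)) ?_ ?_ ?_ ?_
          · rintro ⟨L', B, C⟩ hT
            obtain ⟨hv, hmin, rfl⟩ := by simpa [valleyTriples] using hT
            exact Finset.mem_product.2 ((isValleyTriple_and_min_eq_iff h).1 ⟨hv, hmin⟩)
          · rintro ⟨B, C⟩ hBC
            obtain ⟨hT, hmin⟩ := (isValleyTriple_and_min_eq_iff h).2 (Finset.mem_product.1 hBC)
            simpa [valleyTriples] using ⟨hT, hmin⟩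
          · rintro ⟨L', B, C⟩ hT
            obtain ⟨-, -, rfl⟩ := by simpa [valleyTriples] using hT
            rfl
          · intro _ _
            rfl
      _ = 2 ^ (n - 3 - m) := by
          rw [Finset.card_product, Finset.card_Icc_finset, Finset.card_Icc_finset,
            Finset.card_singleton, Finset.card_pair, ← pow_add]
          · congr 1; omega
          · exact h.lt_max'.ne
          · simpa using ⟨h.lt_max'_compl, Finset.mem_compl.1 (Lᶜ.max'_mem _)⟩
          · simpa [Finset.insert_subset_iff] using ⟨h.mem, h.lt_max'.le, L.max'_mem _⟩
  · rw [Finset.card_eq_zero, Finset.filter_eq_empty_iff]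
    rintro ⟨L', B, C⟩ hT ⟨hmin, rfl⟩
    exact h ((Finset.mem_filter.1 hT).2.isValleySplit hmin)

theorem Iio_inter_insert_union {P Q : Finset (Fin n)} (hP : P ⊆ Iio m) (hQ : Q ⊆ Ioi m) :
    Iio m ∩ insert m (P ∪ Q) = P := by
  ext x
  have := @hP x
  have := @hQ x
  simp only [Finset.mem_inter, Finset.mem_insert, Finset.mem_union, Finset.mem_Iio,
    Finset.mem_Ioi] at *
  grind

theorem Ioi_inter_insert_union {P Q : Finset (Fin n)} (hP : P ⊆ Iio m) (hQ : Q ⊆ Ioi m) :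
    Ioi m ∩ insert m (P ∪ Q) = Q := by
  ext x
  have := @hP x
  have := @hQ x
  simp only [Finset.mem_inter, Finset.mem_insert, Finset.mem_union, Finset.mem_Iio,
    Finset.mem_Ioi] at *
  grind

theorem insert_Iio_inter_union_Ioi_inter (hm : m ∈ L) :
    insert m (Iio m ∩ L ∪ Ioi m ∩ L) = L := by
  ext x
  simp only [Finset.mem_inter, Finset.mem_insert, Finset.mem_union, Finset.mem_Iio,
    Finset.mem_Ioi]
  grind

theorem card_filter_nonempty_and_sdiff_nonempty {α : Type*} [DecidableEq α] (s : Finset α) :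
    #{Q ∈ s.powerset | Q.Nonempty ∧ (s \ Q).Nonempty} = 2 ^ #s - 2 := by
  rcases s.eq_empty_or_nonempty with rfl | hs
  · simp
  have : {Q ∈ s.powerset | Q.Nonempty ∧ (s \ Q).Nonempty} = s.powerset \ {∅, s} := by
    ext Q
    simp only [Finset.mem_filter, Finset.mem_powerset, Finset.mem_sdiff, Finset.mem_insert,
      Finset.mem_singleton, Finset.nonempty_iff_ne_empty, ne_eq, Finset.sdiff_eq_empty_iff_subset]
    constructor
    · rintro ⟨hQ, h0, hs⟩; exact ⟨hQ, by rintro (h | h) <;> simp_all⟩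
    · rintro ⟨hQ, h⟩; exact ⟨hQ, fun h' => h (Or.inl h'), fun h' => h (Or.inr (hQ.antisymm h'))⟩
  rw [this, Finset.card_sdiff_of_subset (by simp [Finset.insert_subset_iff]),
    Finset.card_powerset, Finset.card_pair hs.ne_empty.symm]

theorem card_filter_isValleySplit (m : Fin n) :
    #{L | IsValleySplit m L} = 2 ^ (m : ℕ) * (2 ^ (n - 1 - m) - 2) := by
  rw [← Fin.card_Ioi, ← Fin.card_Iio, ← Finset.card_powerset,
    ← card_filter_nonempty_and_sdiff_nonempty, ← Finset.card_product]
  refine Finset.card_nbij' (fun L => (Iio m ∩ L, Ioi m ∩ L)) (fun p => insert m (p.1 ∪ p.2))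
    ?_ ?_ ?_ ?_
  · rintro L hL
    obtain ⟨-, hL, hR⟩ := Finset.mem_filter.1 hL |>.2
    simp only [Finset.coe_product, Set.mem_prod, Finset.mem_coe, Finset.mem_powerset,
      Finset.mem_filter, Finset.inter_subset_left, true_and, Finset.sdiff_inter_self_left]
    exact ⟨hL, hR⟩
  · rintro ⟨P, Q⟩ hPQ
    simp only [Finset.coe_product, Set.mem_prod, Finset.mem_coe, Finset.mem_powerset,
      Finset.mem_filter] at hPQ
    obtain ⟨hP, hQ, hQne, hQc⟩ := hPQ
    simp only [Finset.coe_filter, Finset.mem_univ, true_and, Set.mem_ofPred_eq]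
    refine ⟨Finset.mem_insert_self _ _, ?_, ?_⟩
    · rwa [Ioi_inter_insert_union hP hQ]
    · rwa [← Finset.sdiff_inter_self_left, Ioi_inter_insert_union hP hQ]
  · intro L hL
    exact insert_Iio_inter_union_Ioi_inter (Finset.mem_filter.1 hL).2.mem
  · rintro ⟨P, Q⟩ hPQ
    simp only [Finset.coe_product, Set.mem_prod, Finset.mem_coe, Finset.mem_powerset,
      Finset.mem_filter] at hPQ
    exact Prod.ext (Iio_inter_insert_union hPQ.1 hPQ.2.1) (Ioi_inter_insert_union hPQ.1 hPQ.2.1)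

theorem sum_range_two_pow_sub_two {n : ℕ} (hn : 2 ≤ n) :
    ∑ t ∈ range n, (2 ^ t - 2) = 2 ^ n - 2 * n := by
  induction n, hn using Nat.le_induction with
  | base => decide
  | succ n hn ih =>
    rw [Finset.sum_range_succ, ih, pow_succ]
    have := Nat.lt_two_pow_self (n := n - 1)
    have : 2 ^ n = 2 * 2 ^ (n - 1) := by rw [← pow_succ']; congr 1; omega
    omega

theorem sum_range_two_pow_mul_sub_two_mul_two_pow {n : ℕ} (hn : 3 ≤ n) :
    ∑ i ∈ range n, 2 ^ i * (2 ^ (n - 1 - i) - 2) * 2 ^ (n - 3 - i) =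
      2 ^ (n - 2) * (2 ^ (n - 1) - n) := by
  have hterm : ∀ i ∈ range n, 2 ^ i * (2 ^ (n - 1 - i) - 2) * 2 ^ (n - 3 - i) =
      2 ^ (n - 3) * (2 ^ (n - 1 - i) - 2) := by
    intro i hi
    rcases Nat.lt_or_ge (n - 3) i with h | h
    · have : 2 ^ (n - 1 - i) ≤ 2 ^ 1 := Nat.pow_le_pow_right (by norm_num) (by omega)
      simp [Nat.sub_eq_zero_of_le (this.trans_eq (pow_one 2))]
    · rw [mul_right_comm, ← pow_add, Nat.add_sub_cancel' h]
  rw [Finset.sum_congr rfl hterm, ← Finset.mul_sum,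
    Finset.sum_range_reflect (fun t => 2 ^ t - 2) n, sum_range_two_pow_sub_two (by omega)]
  obtain ⟨k, rfl⟩ : ∃ k, n = k + 3 := ⟨n - 3, by omega⟩
  simp only [Nat.add_sub_cancel, show k + 3 - 2 = k + 1 by omega,
    show k + 3 - 1 = k + 2 by omega, pow_succ, Nat.mul_sub]
  ring_nf

theorem card_valleyTriples (hn : 3 ≤ n) :
    #(valleyTriples n) = 2 ^ (n - 2) * (2 ^ (n - 1) - n) := by
  rw [Finset.card_eq_sum_card_fiberwise (f := fun T => T.2.1.min)
    (t := univ.map ⟨((↑) : Fin n → WithTop (Fin n)), WithTop.coe_injective⟩) ?_,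
    Finset.sum_map]
  · have hfiber (m : Fin n) : #{T ∈ valleyTriples n | T.2.1.min = (m : WithTop (Fin n))} =
        2 ^ (m : ℕ) * (2 ^ (n - 1 - m) - 2) * 2 ^ (n - 3 - m) := by
      rw [Finset.card_eq_sum_card_fiberwise (f := Prod.fst) (t := univ)
        fun _ _ => Finset.mem_coe.2 (Finset.mem_univ _)]
      simp only [Finset.filter_filter, card_valleyTriples_fiber]
      rw [← Finset.sum_filter, Finset.sum_const, smul_eq_mul, card_filter_isValleySplit]
    simp only [Function.Embedding.coeFn_mk, hfiber]
    rw [Fin.sum_univ_eq_sum_range (fun i => 2 ^ i * (2 ^ (n - 1 - i) - 2) * 2 ^ (n - 3 - i)),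
      sum_range_two_pow_mul_sub_two_mul_two_pow hn]
  · intro T hT
    have hne : T.2.1.Nonempty := Finset.card_pos.1 (by
      have := (Finset.mem_filter.1 (Finset.mem_coe.1 hT)).2.two_le_card; omega)
    exact Finset.mem_map.2 ⟨_, Finset.mem_univ _, Finset.coe_min' hne⟩

end Count

theorem increasing_one_valley_count (n : ℕ) (hn : 3 ≤ n) :
    {π : Equiv.Perm (Fin n) | Increasing π ∧ valCount π = 1}.ncard
      = 2 ^ (n - 2) * (2 ^ (n - 1) - n) := by
  simp only [increasing_and_valCount_eq_one_iff]
  rw [ncard_existsUnique_isValley, ← coe_valleyTriples, Set.ncard_coe_finset,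
    card_valleyTriples hn]
end

section
/- Let inc(n) denote the number of increasing permutations of {1,...,n}. Then for n ≥ 1, inc(n+1) = 2·inc(n) + Σ_{i=1}^{n−1} C(n,i)·2^(i−1)·inc(n−i), with inc(0) = inc(1) = 1. In particular, inc(2)=2, inc(3)=6, inc(4)=24, inc(5)=112, inc(6)=584, inc(7)=3376. -/
open Finset

/-- number of increasing permutations of `{1,...,n}` -/
noncomputable def incCount (n : ℕ) : ℕ :=
  {π : Equiv.Perm (Fin n) | Increasing π}.ncard

/-!
Sort the increasing permutations of `{0, …, n}` by the position `i` of their minimum `0`.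
If `i = n`, deleting `0` leaves an arbitrary increasing permutation. If `i < n`, then `0` is
the lowest valley when `i > 0`, hence the first one, so the `i` entries in front of it form a
word without valleys while the `n - i` entries behind it form an arbitrary increasing word.
Choosing the `C(n, i)` values of the front part, a valley-free arrangement of them and an
increasing arrangement of the rest gives `C(n, i) * 2 ^ (i - 1) * inc (n - i)` permutations:
the minimum of a valley-free word sits at one of its two ends, so there are `2 ^ (i - 1)`
valley-free arrangements of `i ≥ 1` letters. The term `i = 0` is the second `inc n`.
-/

open Function Equiv

section Valleys

variable {α β : Type*} [LinearOrder α] [LinearOrder β] {k m : ℕ}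

def valleys (f : Fin k → α) : Set (Fin k) :=
  {ℓ | 1 ≤ ℓ.val ∧ ∃ h2 : ℓ.val + 1 < k,
    f ⟨ℓ.val - 1, lt_of_le_of_lt (Nat.sub_le _ _) ℓ.isLt⟩ > f ℓ ∧
      f ℓ < f ⟨ℓ.val + 1, h2⟩}

theorem increasing_iff_strictMonoOn_valleys {n : ℕ} (π : Perm (Fin n)) :
    Increasing π ↔ StrictMonoOn π (valleys π) :=
  ⟨fun h _ hi _ hj hij => h _ _ hi hj hij, fun h _ _ hi hj hij => h hi hj hij⟩

theorem valleys_eq_empty_of_le_two (f : Fin k → α) (hk : k ≤ 2) : valleys f = ∅ :=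
  Set.eq_empty_of_forall_notMem fun _ ⟨h1, h2, _⟩ => by omega

theorem valleys_comp_strictMono {g : α → β} (hg : StrictMono g) (f : Fin k → α) :
    valleys (g ∘ f) = valleys f := by
  ext ℓ
  simp [valleys, hg.lt_iff_lt]

theorem StrictMono.strictMonoOn_comp_iff {γ : Type*} [Preorder γ] {g : α → β}
    (hg : StrictMono g) {f : γ → α} {s : Set γ} :
    StrictMonoOn (g ∘ f) s ↔ StrictMonoOn f s :=
  ⟨fun h _ ha _ hb hab => hg.lt_iff_lt.mp (h ha hb hab), hg.comp_strictMonoOn⟩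

theorem strictMonoOn_comp_valleys_iff {g : α → β} (hg : StrictMono g) (f : Fin k → α) :
    StrictMonoOn (g ∘ f) (valleys (g ∘ f)) ↔ StrictMonoOn f (valleys f) := by
  rw [valleys_comp_strictMono hg, hg.strictMonoOn_comp_iff]

theorem StrictMono.strictMonoOn_image_iff {γ δ : Type*} [LinearOrder γ] [Preorder δ]
    {e : γ → δ} (he : StrictMono e) {f : δ → α} {s : Set γ} :
    StrictMonoOn f (e '' s) ↔ StrictMonoOn (f ∘ e) s := by
  refine ⟨fun h => h.comp (he.strictMonoOn s) (Set.mapsTo_image e s), ?_⟩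
  rintro h _ ⟨a, ha, rfl⟩ _ ⟨b, hb, rfl⟩ hab
  exact h ha hb (he.lt_iff_lt.mp hab)

def Fin.segment (c : ℕ) (h : c + k ≤ m) (j : Fin k) : Fin m := ⟨c + j, by omega⟩

@[simp] theorem Fin.val_segment (c : ℕ) (h : c + k ≤ m) (j : Fin k) :
    (Fin.segment c h j : ℕ) = c + j := rfl

theorem Fin.segment_strictMono (c : ℕ) (h : c + k ≤ m) : StrictMono (Fin.segment c h) :=
  fun _ _ hij => Nat.add_lt_add_left hij c

theorem Fin.segment_zero_eq_id (h : 0 + k ≤ k) : Fin.segment 0 h = id := by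
  funext j; exact Fin.ext (zero_add _)

theorem mem_valleys_comp_segment {f : Fin m → α} {c : ℕ} (h : c + k ≤ m) (j : Fin k) :
    j ∈ valleys (f ∘ Fin.segment c h) ↔
      1 ≤ j.val ∧ j.val + 1 < k ∧ Fin.segment c h j ∈ valleys f := by
  simp only [valleys, Set.mem_ofPred_eq, comp_apply]
  constructor
  · rintro ⟨h1, h2, hl, hr⟩
    refine ⟨h1, h2, by simp; omega, by simp; omega, ?_, ?_⟩
    · convert hl using 2; exact Fin.ext (by simp; omega)
    · convert hr using 2; exact Fin.ext (by simp; omega)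
  · rintro ⟨h1, h2, -, _, hl, hr⟩
    refine ⟨h1, h2, ?_, ?_⟩
    · convert hl using 2; exact Fin.ext (by simp; omega)
    · convert hr using 2; exact Fin.ext (by simp; omega)

end Valleys

section StrictMin

variable {α : Type*} [LinearOrder α] {m : ℕ} {f : Fin m → α} {p : Fin m}

theorem notMem_valleys_of_succ_eq (hp : ∀ j ≠ p, f p < f j) {ℓ : Fin m}
    (h : ℓ.val + 1 = p.val) : ℓ ∉ valleys f := by
  rintro ⟨-, h2, -, hr⟩
  rw [show (⟨ℓ.val + 1, h2⟩ : Fin m) = p from Fin.ext h] at hr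
  exact (hp ℓ (by rintro rfl; omega)).asymm hr

theorem notMem_valleys_of_eq_succ (hp : ∀ j ≠ p, f p < f j) {ℓ : Fin m}
    (h : ℓ.val = p.val + 1) : ℓ ∉ valleys f := by
  rintro ⟨-, -, hl, -⟩
  rw [show (⟨ℓ.val - 1, _⟩ : Fin m) = p from Fin.ext (by simp; omega)] at hl
  exact (hp ℓ (by rintro rfl; omega)).asymm hl

theorem mem_valleys_of_strictMin (hp : ∀ j ≠ p, f p < f j) (h0 : 0 < p.val)
    (h1 : p.val + 1 < m) : p ∈ valleys f :=
  ⟨h0, h1, hp _ (by simp [Fin.ext_iff]; omega), hp _ (by simp [Fin.ext_iff])⟩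

theorem valleys_inter_Iio_of_strictMin (hp : ∀ j ≠ p, f p < f j) :
    valleys f ∩ Set.Iio p =
      Fin.segment 0 ((zero_add _).trans_le p.isLt.le) ''
        valleys (f ∘ Fin.segment 0 ((zero_add _).trans_le p.isLt.le)) := by
  ext ℓ
  simp only [Set.mem_inter_iff, Set.mem_Iio, Set.mem_image, mem_valleys_comp_segment]
  constructor
  · rintro ⟨hv, hlt⟩
    have : ℓ.val + 1 ≠ p.val := fun h => notMem_valleys_of_succ_eq hp h hv
    have hlt' : ℓ.val < p.val := hlt
    refine ⟨⟨ℓ, hlt'⟩, ⟨hv.1, show ℓ.val + 1 < p.val by omega, ?_⟩,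
      Fin.ext (zero_add _)⟩
    convert hv; exact Fin.ext (zero_add _)
  · rintro ⟨j, ⟨-, -, hv⟩, rfl⟩
    exact ⟨hv, show 0 + j.val < p.val by omega⟩

theorem valleys_inter_Ioi_of_strictMin (hp : ∀ j ≠ p, f p < f j) {k : ℕ}
    (h : p.val + 1 + k = m) :
    valleys f ∩ Set.Ioi p =
      Fin.segment (p.val + 1) h.le '' valleys (f ∘ Fin.segment (p.val + 1) h.le) := by
  ext ℓ
  simp only [Set.mem_inter_iff, Set.mem_Ioi, Set.mem_image, mem_valleys_comp_segment]
  constructor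
  · rintro ⟨hv, hlt⟩
    have : ℓ.val ≠ p.val + 1 := fun h => notMem_valleys_of_eq_succ hp h hv
    have hlt' : p.val < ℓ.val := hlt
    have := hv.2.1
    refine ⟨⟨ℓ.val - (p.val + 1), by omega⟩, ⟨by simp; omega, by simp; omega, ?_⟩, ?_⟩
    · convert hv; exact Fin.ext (by simp; omega)
    · exact Fin.ext (by simp; omega)
  · rintro ⟨j, ⟨-, -, hv⟩, rfl⟩
    exact ⟨hv, show p.val < p.val + 1 + j by omega⟩

/-- An interior strict minimum is the lowest valley, so no valley may lie to its left. -/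
theorem strictMonoOn_valleys_iff_of_strictMin (hp : ∀ j ≠ p, f p < f j) {k : ℕ}
    (h : p.val + 1 + k = m) (hk : 0 < k) :
    StrictMonoOn f (valleys f) ↔
      valleys (f ∘ Fin.segment 0 ((zero_add _).trans_le p.isLt.le)) = ∅ ∧
        StrictMonoOn (f ∘ Fin.segment (p.val + 1) h.le)
          (valleys (f ∘ Fin.segment (p.val + 1) h.le)) := by
  have hA := valleys_inter_Iio_of_strictMin hp
  rw [← (Fin.segment_strictMono _ _).strictMonoOn_image_iff,
    ← valleys_inter_Ioi_of_strictMin hp h, ← Set.image_eq_empty, ← hA]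
  constructor
  · intro hf
    refine ⟨Set.eq_empty_of_forall_notMem fun ℓ ⟨hℓ, hlt⟩ => ?_,
      hf.mono Set.inter_subset_left⟩
    have hpv : p ∈ valleys f :=
      mem_valleys_of_strictMin hp (lt_of_le_of_lt (Nat.zero_le _) hlt) (by omega)
    exact (hp ℓ hlt.ne).asymm (hf hℓ hpv hlt)
  · rintro ⟨hpre, hsuf⟩
    have hsub : valleys f ⊆ insert p (valleys f ∩ Set.Ioi p) := by
      intro ℓ hℓ
      rcases lt_trichotomy ℓ p with hlt | rfl | hgt
      · exact (hpre.subset ⟨hℓ, hlt⟩ : ℓ ∈ (∅ : Set (Fin m))).elim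
      · exact Set.mem_insert _ _
      · exact Set.mem_insert_of_mem _ ⟨hℓ, hgt⟩
    refine StrictMonoOn.mono ?_ hsub
    exact (strictMonoOn_insert_iff_of_forall_ge fun x hx => hx.2.le).mpr
      ⟨fun b _ hb => hp b hb.ne', hsuf⟩

theorem valleys_eq_image_of_strictMin_last (hp : ∀ j ≠ p, f p < f j) (h : p.val + 1 = m) :
    valleys f = Fin.segment 0 ((zero_add _).trans_le p.isLt.le) ''
      valleys (f ∘ Fin.segment 0 ((zero_add _).trans_le p.isLt.le)) := by
  rw [← valleys_inter_Iio_of_strictMin hp, Set.inter_eq_left.mpr]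
  intro ℓ hℓ
  exact show ℓ.val < p.val by have := hℓ.2.1; omega

theorem valleys_eq_image_of_strictMin_zero {k : ℕ} {f : Fin (k + 1) → α}
    (hp : ∀ j ≠ 0, f 0 < f j) :
    valleys f =
      Fin.segment 1 (Nat.add_comm 1 k).le ''
        valleys (f ∘ Fin.segment 1 (Nat.add_comm 1 k).le) := by
  have hpos : valleys f ⊆ Set.Ioi 0 := fun ℓ hℓ => show 0 < ℓ.val from hℓ.1
  have := valleys_inter_Ioi_of_strictMin hp (Nat.add_comm 1 k)
  rwa [Set.inter_eq_left.mpr hpos] at this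

end StrictMin

section InsertMin

variable {n : ℕ}

def insertMin (p : Fin (n + 1)) : Perm (Fin n) ≃ {π : Perm (Fin (n + 1)) // π p = 0} :=
  ((equivCongr (Equiv.refl _) (finSuccAboveEquiv 0)).trans (optionSubtype 0).symm).trans
    (subtypeEquiv (equivCongr (finSuccEquiv' p).symm (Equiv.refl _)) fun e => by simp)

theorem insertMin_apply_succAbove (p : Fin (n + 1)) (g : Perm (Fin n)) (j : Fin n) :
    (insertMin p g).1 (p.succAbove j) = (g j).succ := by
  simp [insertMin, finSuccAboveEquiv_apply]

theorem apply_lt_apply_of_apply_eq_zero {π : Perm (Fin (n + 1))} {p : Fin (n + 1)}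
    (h : π p = 0) : ∀ j ≠ p, π p < π j := fun j hj => by
  rw [h, Fin.pos_iff_ne_zero, ← h]
  exact π.injective.ne hj

theorem insertMin_apply_lt (p : Fin (n + 1)) (g : Perm (Fin n)) :
    ∀ j ≠ p, (insertMin p g).1 p < (insertMin p g).1 j :=
  apply_lt_apply_of_apply_eq_zero (insertMin p g).2

theorem insertMin_comp_segment_of_le (p : Fin (n + 1)) (g : Perm (Fin n)) {c k : ℕ}
    (h : c + k ≤ n) (hcp : c + k ≤ p.val) :
    (insertMin p g).1 ∘ Fin.segment c (h.trans n.le_succ) =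
      Fin.succ ∘ g ∘ Fin.segment c h := by
  funext j
  rw [comp_apply, comp_apply, comp_apply, ← insertMin_apply_succAbove,
    Fin.succAbove_of_castSucc_lt _ _ (show c + j.val < p.val by omega)]
  rfl

theorem insertMin_comp_segment_succ (p : Fin (n + 1)) (g : Perm (Fin n)) {c k : ℕ}
    (h : c + k ≤ n) (hpc : p.val ≤ c) :
    (insertMin p g).1 ∘ Fin.segment (c + 1) (by omega) = Fin.succ ∘ g ∘ Fin.segment c h := by
  funext j
  rw [comp_apply, comp_apply, comp_apply, ← insertMin_apply_succAbove,
    Fin.succAbove_of_le_castSucc _ _ (show p.val ≤ c + j.val by omega)]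
  exact congrArg _ (Fin.ext (Nat.add_right_comm _ _ _))

theorem valleys_insertMin_zero_eq_empty_iff (g : Perm (Fin n)) :
    valleys (insertMin 0 g).1 = ∅ ↔ valleys g = ∅ := by
  rw [valleys_eq_image_of_strictMin_zero (insertMin_apply_lt 0 g), Set.image_eq_empty,
    insertMin_comp_segment_succ 0 g (c := 0) (zero_add n).le le_rfl,
    valleys_comp_strictMono Fin.strictMono_succ, Fin.segment_zero_eq_id]
  rfl

theorem valleys_insertMin_last (g : Perm (Fin n)) :
    valleys (insertMin (Fin.last n) g).1 =
      Fin.segment 0 ((zero_add n).trans_le n.le_succ) '' valleys g := by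
  rw [valleys_eq_image_of_strictMin_last (insertMin_apply_lt _ g) rfl,
    insertMin_comp_segment_of_le _ g (c := 0) (zero_add n).le (zero_add n).le,
    valleys_comp_strictMono Fin.strictMono_succ, Fin.segment_zero_eq_id]
  rfl

theorem valleys_insertMin_last_eq_empty_iff (g : Perm (Fin n)) :
    valleys (insertMin (Fin.last n) g).1 = ∅ ↔ valleys g = ∅ := by
  rw [valleys_insertMin_last, Set.image_eq_empty]

theorem increasing_insertMin_last_iff (g : Perm (Fin n)) :
    Increasing (insertMin (Fin.last n) g).1 ↔ Increasing g := by
  rw [increasing_iff_strictMonoOn_valleys, increasing_iff_strictMonoOn_valleys,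
    valleys_insertMin_last, (Fin.segment_strictMono _ _).strictMonoOn_image_iff,
    insertMin_comp_segment_of_le _ g (c := 0) (zero_add n).le (zero_add n).le,
    Fin.segment_zero_eq_id, Fin.strictMono_succ.strictMonoOn_comp_iff]
  rfl

theorem valleys_insertMin_nonempty {p : Fin (n + 1)} (hp0 : 0 < p.val) (hpn : p.val < n)
    (g : Perm (Fin n)) : (valleys (insertMin p g).1).Nonempty :=
  ⟨p, mem_valleys_of_strictMin (insertMin_apply_lt p g) hp0 (by omega)⟩

theorem increasing_insertMin_iff {p : Fin (n + 1)} (hpn : p.val < n) (g : Perm (Fin n)) :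
    Increasing (insertMin p g).1 ↔
      valleys (g ∘ Fin.segment 0 ((zero_add _).trans_le hpn.le)) = ∅ ∧
        StrictMonoOn (g ∘ Fin.segment p.val (Nat.add_sub_of_le hpn.le).le)
          (valleys (g ∘ Fin.segment p.val (Nat.add_sub_of_le hpn.le).le)) := by
  rw [increasing_iff_strictMonoOn_valleys,
    strictMonoOn_valleys_iff_of_strictMin (insertMin_apply_lt p g) (k := n - p.val)
      (by omega) (by omega),
    insertMin_comp_segment_of_le p g (c := 0) ((zero_add _).trans_le hpn.le) (by simp),
    insertMin_comp_segment_succ p g (Nat.add_sub_of_le hpn.le).le le_rfl,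
    valleys_comp_strictMono Fin.strictMono_succ, strictMonoOn_comp_valleys_iff Fin.strictMono_succ]

end InsertMin

theorem Nat.card_subtype_eq_sum_card_fiberwise {α ι : Type*} [Finite α] [Fintype ι]
    (P : α → Prop) (F : α → ι) :
    Nat.card {x // P x} = ∑ i, Nat.card {x // P x ∧ F x = i} := by
  rw [← Nat.card_congr (sigmaFiberEquiv (F ∘ Subtype.val)), Nat.card_sigma]
  exact Fintype.sum_congr _ _ fun i => Nat.card_congr (subtypeSubtypeEquivSubtypeInter P (F · = i))

def sumEquivEquivProd {α₁ α₂ β : Type*} (q : β → Prop) [DecidablePred q] :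
    {e : α₁ ⊕ α₂ ≃ β // ∀ x, q (e x) ↔ x.isLeft} ≃
      (α₁ ≃ {y // q y}) × (α₂ ≃ {y // ¬q y}) where
  toFun e := (sumIsLeft.symm.trans (e.1.subtypeEquiv fun x => (e.2 x).symm),
    sumIsRight.symm.trans (e.1.subtypeEquiv fun x => Sum.not_isLeft.symm.trans (e.2 x).not.symm))
  invFun uv := ⟨(uv.1.sumCongr uv.2).trans (sumCompl q), by
    rintro (x | x)
    · simpa using (uv.1 x).2
    · simpa using (uv.2 x).2⟩
  left_inv e := by ext (x | x) <;> rfl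
  right_inv uv := by ext <;> rfl

theorem univ_map_inl_trans_eq_iff {α₁ α₂ β : Type*} [Fintype α₁] (e : α₁ ⊕ α₂ ≃ β)
    (S : Finset β) :
    Finset.univ.map (Embedding.inl.trans e.toEmbedding) = S ↔ ∀ x, e x ∈ S ↔ x.isLeft := by
  rw [Finset.ext_iff, ← e.forall_congr_right]
  refine forall_congr' fun x => ?_
  rw [iff_comm]
  cases x <;> simp

noncomputable def valleyFreeCount (k : ℕ) : ℕ :=
  Nat.card {σ : Perm (Fin k) // valleys σ = ∅}

theorem incCount_eq_card (n : ℕ) :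
    incCount n = Nat.card {π : Perm (Fin n) // Increasing π} := rfl

section Relabel

variable {β γ : Type*} [LinearOrder β] [LinearOrder γ] [Fintype γ] {k : ℕ}

theorem card_equiv_valleys_eq_empty (hγ : Fintype.card γ = k) {φ : γ → β}
    (hφ : StrictMono φ) :
    Nat.card {u : Fin k ≃ γ // valleys (φ ∘ u) = ∅} = valleyFreeCount k := by
  let e := Fintype.orderIsoFinOfCardEq γ hγ
  refine Nat.card_congr (subtypeEquiv (equivCongr (Equiv.refl _) e.symm.toEquiv) fun u => ?_)
  have : φ ∘ u = (φ ∘ e) ∘ (e.symm ∘ u) := by funext j; simp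
  rw [this, valleys_comp_strictMono (hφ.comp e.strictMono)]
  rfl

theorem card_equiv_strictMonoOn_valleys (hγ : Fintype.card γ = k) {φ : γ → β}
    (hφ : StrictMono φ) :
    Nat.card {u : Fin k ≃ γ // StrictMonoOn (φ ∘ u) (valleys (φ ∘ u))} = incCount k := by
  let e := Fintype.orderIsoFinOfCardEq γ hγ
  rw [incCount_eq_card]
  refine Nat.card_congr (subtypeEquiv (equivCongr (Equiv.refl _) e.symm.toEquiv) fun u => ?_)
  have : φ ∘ u = (φ ∘ e) ∘ (e.symm ∘ u) := by funext j; simp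
  rw [this, strictMonoOn_comp_valleys_iff (hφ.comp e.strictMono),
    increasing_iff_strictMonoOn_valleys]
  rfl

end Relabel

theorem card_sumEquiv_fiber {n a b : ℕ} (h : a + b = n) {S : Finset (Fin n)} (hS : S.card = a) :
    Nat.card {e : Fin a ⊕ Fin b ≃ Fin n // (∀ x, e x ∈ S ↔ x.isLeft) ∧
      valleys (e ∘ Sum.inl) = ∅ ∧ StrictMonoOn (e ∘ Sum.inr) (valleys (e ∘ Sum.inr))} =
      valleyFreeCount a * incCount b := by
  have hSc : Fintype.card {y // y ∉ S} = b := by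
    rw [Fintype.card_subtype_compl, Fintype.card_coe, hS, Fintype.card_fin]; omega
  rw [← card_equiv_valleys_eq_empty ((Fintype.card_coe S).trans hS) (φ := Subtype.val)
    (fun _ _ => id), ← card_equiv_strictMonoOn_valleys hSc (φ := Subtype.val) (fun _ _ => id),
    ← Nat.card_prod]
  exact Nat.card_congr <|
    (subtypeSubtypeEquivSubtypeInter
      (fun e : Fin a ⊕ Fin b ≃ Fin n => ∀ x, e x ∈ S ↔ x.isLeft) _).symm.trans <|
    (subtypeEquiv (sumEquivEquivProd (· ∈ S)) fun e => Iff.rfl).trans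
    (subtypeProdEquivProd (p := fun u : Fin a ≃ S => valleys (Subtype.val ∘ u) = ∅)
      (q := fun v : Fin b ≃ {y // y ∉ S} =>
        StrictMonoOn (Subtype.val ∘ v) (valleys (Subtype.val ∘ v))))

theorem card_valleyFree_prefix_increasing_suffix {n a b : ℕ} (h : a + b = n) :
    Nat.card {g : Perm (Fin n) //
      valleys (g ∘ Fin.segment 0 ((zero_add a).trans_le (Nat.le.intro h))) = ∅ ∧
        StrictMonoOn (g ∘ Fin.segment a h.le) (valleys (g ∘ Fin.segment a h.le))} =
      n.choose a * (valleyFreeCount a * incCount b) := by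
  let split : Fin a ⊕ Fin b ≃ Fin n := finSumFinEquiv.trans (finCongr h)
  have hl : ⇑split ∘ Sum.inl = Fin.segment 0 ((zero_add a).trans_le (Nat.le.intro h)) := by
    funext j; ext; simp [split]
  have hr : ⇑split ∘ Sum.inr = Fin.segment a h.le := by
    funext j; ext; simp [split]
  let P : (Fin a ⊕ Fin b ≃ Fin n) → Prop := fun e =>
    valleys (e ∘ Sum.inl) = ∅ ∧ StrictMonoOn (e ∘ Sum.inr) (valleys (e ∘ Sum.inr))
  let S : (Fin a ⊕ Fin b ≃ Fin n) → {S : Finset (Fin n) // S.card = a} := fun e =>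
    ⟨Finset.univ.map (Embedding.inl.trans e.toEmbedding), by simp⟩
  have hfib : ∀ T, Nat.card {e // P e ∧ S e = T} = valleyFreeCount a * incCount b := by
    rintro ⟨T, hT⟩
    rw [← card_sumEquiv_fiber h hT]
    refine Nat.card_congr (subtypeEquivRight fun e => ?_)
    rw [and_comm, Subtype.ext_iff, univ_map_inl_trans_eq_iff]
  rw [Nat.card_congr (subtypeEquiv (equivCongr split.symm (Equiv.refl _)) fun g => ?_),
    Nat.card_subtype_eq_sum_card_fiberwise P S, Fintype.sum_congr _ _ hfib, Finset.sum_const,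
    Finset.card_univ, Fintype.card_finset_len, Fintype.card_fin, smul_eq_mul]
  show _ ↔ P (split.trans g)
  simp only [P, coe_trans, comp_assoc, hl, hr]

theorem card_perm_succ_eq_sum {n : ℕ} (P : Perm (Fin (n + 1)) → Prop) :
    Nat.card {π // P π} = ∑ p, Nat.card {g : Perm (Fin n) // P (insertMin p g).1} := by
  rw [Nat.card_subtype_eq_sum_card_fiberwise P (fun π => π.symm 0)]
  refine Fintype.sum_congr _ _ fun p => Nat.card_congr ?_
  refine (subtypeEquivRight fun π => ?_).trans <|
    (subtypeSubtypeEquivSubtypeInter (fun π => π p = 0) P).symm.trans <|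
    (subtypeEquivOfSubtype (insertMin p)).symm
  rw [symm_apply_eq, eq_comm, and_comm]

theorem valleyFreeCount_of_le_one {k : ℕ} (hk : k ≤ 1) : valleyFreeCount k = 1 := by
  rw [valleyFreeCount,
    Nat.card_congr (subtypeUnivEquiv fun σ => valleys_eq_empty_of_le_two _ (by omega)),
    Nat.card_perm, Nat.card_fin]
  interval_cases k <;> rfl

theorem valleyFreeCount_succ_succ (k : ℕ) :
    valleyFreeCount (k + 2) = 2 * valleyFreeCount (k + 1) := by
  rw [valleyFreeCount, card_perm_succ_eq_sum, Fintype.sum_eq_add 0 (Fin.last (k + 1))]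
  · rw [Nat.card_congr (subtypeEquivRight valleys_insertMin_zero_eq_empty_iff),
      Nat.card_congr (subtypeEquivRight valleys_insertMin_last_eq_empty_iff), two_mul]
    rfl
  · exact Fin.last_pos.ne
  · rintro p ⟨h0, hlast⟩
    have hp := valleys_insertMin_nonempty (Fin.pos_iff_ne_zero.mpr h0) (Fin.val_lt_last hlast)
    exact Nat.card_eq_zero.mpr <| Or.inl ⟨fun g => (hp g.1).ne_empty g.2⟩

/-- For `k = 0` the formula holds because `0 - 1 = 0` in `ℕ`. -/
theorem valleyFreeCount_eq (k : ℕ) : valleyFreeCount k = 2 ^ (k - 1) := by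
  induction k with
  | zero => exact valleyFreeCount_of_le_one (Nat.zero_le 1)
  | succ k ih =>
    rcases k with _ | k
    · exact valleyFreeCount_of_le_one le_rfl
    · rw [valleyFreeCount_succ_succ, ih, ← pow_succ']
      rfl

theorem incCount_succ (n : ℕ) :
    incCount (n + 1) = ∑ i ∈ Finset.range n, n.choose i * 2 ^ (i - 1) * incCount (n - i) +
      incCount n := by
  rw [incCount_eq_card, card_perm_succ_eq_sum, Fin.sum_univ_castSucc,
    ← Fin.sum_univ_eq_sum_range (fun i => n.choose i * 2 ^ (i - 1) * incCount (n - i))]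
  congr 1
  · refine Fintype.sum_congr _ _ fun i => ?_
    rw [Nat.card_congr (subtypeEquivRight (increasing_insertMin_iff (Fin.castSucc_lt_last i)))]
    refine (card_valleyFree_prefix_increasing_suffix (Nat.add_sub_of_le i.isLt.le)).trans ?_
    rw [valleyFreeCount_eq, mul_assoc]
  · exact Nat.card_congr (subtypeEquivRight increasing_insertMin_last_iff)

theorem incCount_zero : incCount 0 = 1 := by
  rw [incCount_eq_card,
    Nat.card_congr
      (subtypeUnivEquiv (p := fun π : Perm (Fin 0) => Increasing π) fun _ i => i.elim0),
    Nat.card_perm, Nat.card_fin, Nat.factorial_zero]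

theorem incCount_succ_of_pos {n : ℕ} (hn : 1 ≤ n) :
    incCount (n + 1) = 2 * incCount n +
      ∑ i ∈ Finset.Icc 1 (n - 1), n.choose i * 2 ^ (i - 1) * incCount (n - i) := by
  obtain ⟨m, rfl⟩ := Nat.exists_eq_add_of_le' hn
  rw [incCount_succ, Finset.sum_range_succ', Nat.add_sub_cancel,
    ← Finset.Ico_add_one_right_eq_Icc, Finset.sum_Ico_eq_sum_range, Nat.add_sub_cancel]
  simp only [add_comm 1, Nat.choose_zero_right, Nat.zero_sub, pow_zero, Nat.sub_zero, one_mul]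
  ring

theorem incCount_recurrence :
    (∀ n : ℕ, 1 ≤ n →
      incCount (n + 1) = 2 * incCount n +
        ∑ i ∈ Finset.Icc 1 (n - 1), n.choose i * 2 ^ (i - 1) * incCount (n - i)) ∧
    incCount 0 = 1 ∧ incCount 1 = 1 ∧ incCount 2 = 2 ∧ incCount 3 = 6 ∧
    incCount 4 = 24 ∧ incCount 5 = 112 ∧ incCount 6 = 584 ∧ incCount 7 = 3376 := by
  have h0 := incCount_zero
  have h1 : incCount 1 = 1 := by rw [incCount_succ]; simp [h0]
  have h2 : incCount 2 = 2 := by rw [incCount_succ]; simp [Nat.choose, *]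
  have h3 : incCount 3 = 6 := by rw [incCount_succ]; simp [Finset.sum_range_succ, Nat.choose, *]
  have h4 : incCount 4 = 24 := by rw [incCount_succ]; simp [Finset.sum_range_succ, Nat.choose, *]
  have h5 : incCount 5 = 112 := by rw [incCount_succ]; simp [Finset.sum_range_succ, Nat.choose, *]
  have h6 : incCount 6 = 584 := by rw [incCount_succ]; simp [Finset.sum_range_succ, Nat.choose, *]
  have h7 : incCount 7 = 3376 := by rw [incCount_succ]; simp [Finset.sum_range_succ, Nat.choose, *]
  exact ⟨fun n => incCount_succ_of_pos, h0, h1, h2, h3, h4, h5, h6, h7⟩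
end

section
/- The number of increasing permutations π of {1,...,n} satisfying val(π) = des(π) equals the n-th Gould number Σ_{k=0}^{n−1} Σ_{j=k}^{n−1} S(j,k)·k^(n−1−j), where S(j,k) is the Stirling number of the second kind. Equivalently, it equals the number of set partitions of {1,...,n} whose blocks, ordered by their minima, have the last block a singleton. -/
open Finset

/-- Stirling numbers of the second kind. -/
def stirling2 : ℕ → ℕ → ℕ
  | 0, 0 => 1
  | 0, _+1 => 0
  | _+1, 0 => 0
  | n+1, k+1 => (k+1) * stirling2 n (k+1) + stirling2 n k

/-- When the blocks of `P` are ordered by their smallest elements, the last block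
(the one with the largest minimum) is a singleton. -/
def LastBlockSingleton {n : ℕ} (P : Finpartition (Finset.univ : Finset (Fin n))) : Prop :=
  ∃ B ∈ P.parts, B.card = 1 ∧ ∀ B' ∈ P.parts, B' ≠ B → B'.min < B.min


/-!
Both sides are counted through block-minimum maps `m : Fin n → Fin n`, which send every element
to the least element of its block of a set partition.

A permutation `π` has `val π = des π` exactly when every descent bottom is a valley. For such an
increasing `π`, every valley is a right-to-left minimum, and `π` is read off from the map sending
the value at position `i` to the least value at positions `≥ i`: the blocks appear in the order of
their minima, each as an increasing word followed by its minimum. Since `π` ends with an ascent,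
its last block is the singleton of its last value. Conversely, sorting `Fin n` in this order turns
every block-minimum map whose last block is a singleton into such a permutation.

Such a map with last block `{x}` is a block-minimum map on `Fin x` with `k` blocks, `S(x, k)`
choices, together with a block below `x` for each of the `n - 1 - x` elements above `x`.
-/

open scoped Classical

section BlockMinMap

variable {n : ℕ}

def IsBlockMinMap (m : Fin n → Fin n) : Prop :=
  ∀ i, m i ≤ i ∧ m (m i) = m i

def LastBlockSingletonAt (m : Fin n → Fin n) (x : Fin n) : Prop :=
  m x = x ∧ ∀ i, i ≠ x → m i < x

lemma LastBlockSingletonAt.eq {m : Fin n → Fin n} {x y : Fin n} (hx : LastBlockSingletonAt m x)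
    (hy : LastBlockSingletonAt m y) : x = y := by
  by_contra hxy
  have hyx : y < x := hy.1 ▸ hx.2 y (Ne.symm hxy)
  have hxy' : x < y := hx.1 ▸ hy.2 x hxy
  exact lt_asymm hyx hxy'

noncomputable def blockMinMaps (n : ℕ) : Finset (Fin n → Fin n) := {m | IsBlockMinMap m}

noncomputable def fixedPts (m : Fin n → Fin n) : Finset (Fin n) := {i | m i = i}

lemma mem_blockMinMaps {m : Fin n → Fin n} : m ∈ blockMinMaps n ↔ IsBlockMinMap m := by
  simp [blockMinMaps]

lemma mem_fixedPts {m : Fin n → Fin n} {i : Fin n} : i ∈ fixedPts m ↔ m i = i := by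
  simp [fixedPts]

def initRestrict {j : ℕ} (h : j ≤ n) (m : Fin n → Fin n) (i : Fin j) : Fin j :=
  -- the `min` only keeps the value in `Fin j`; for block-minimum maps it is `m i`
  ⟨min (m (i.castLE h)).val i.val, (min_le_right _ _).trans_lt i.isLt⟩

variable {m : Fin n → Fin n}

lemma castLE_initRestrict (hm : IsBlockMinMap m) {j : ℕ} (h : j ≤ n) (i : Fin j) :
    (initRestrict h m i).castLE h = m (i.castLE h) :=
  Fin.ext (min_eq_left (hm _).1)

lemma isBlockMinMap_initRestrict (hm : IsBlockMinMap m) {j : ℕ} (h : j ≤ n) :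
    IsBlockMinMap (initRestrict h m) := fun i =>
  ⟨Fin.le_iff_val_le_val.2 (min_le_right _ _), Fin.castLE_injective h <| by
    rw [castLE_initRestrict hm, castLE_initRestrict hm, (hm _).2]⟩

end BlockMinMap

section Stirling

variable {j : ℕ}

@[simp] lemma castLE_le_succ (i : Fin j) : i.castLE j.le_succ = i.castSucc := rfl

def extendLast (t : Fin j → Fin j) (w : Fin (j + 1)) : Fin (j + 1) → Fin (j + 1) :=
  Fin.lastCases w fun i => (t i).castSucc

@[simp] lemma extendLast_last (t : Fin j → Fin j) (w : Fin (j + 1)) :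
    extendLast t w (Fin.last j) = w := Fin.lastCases_last

@[simp] lemma extendLast_castSucc (t : Fin j → Fin j) (w : Fin (j + 1)) (i : Fin j) :
    extendLast t w i.castSucc = (t i).castSucc := Fin.lastCases_castSucc i

/-- The admissible images of the new element: itself, or an existing block minimum. -/
noncomputable def newImages (t : Fin j → Fin j) : Finset (Fin (j + 1)) :=
  insert (Fin.last j) ((fixedPts t).map Fin.castSuccEmb)

lemma card_fixedPts_extendLast (t : Fin j → Fin j) (w : Fin (j + 1)) :
    #(fixedPts (extendLast t w)) = #(fixedPts t) + if w = Fin.last j then 1 else 0 := by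
  simp only [fixedPts, card_filter, Fin.sum_univ_castSucc, extendLast_castSucc,
    extendLast_last, Fin.castSucc_inj]

lemma initRestrict_extendLast {t : Fin j → Fin j} (ht : IsBlockMinMap t) (w : Fin (j + 1)) :
    initRestrict j.le_succ (extendLast t w) = t := by
  funext i
  exact Fin.ext (by simpa [initRestrict] using (ht i).1)

lemma eq_extendLast_initRestrict {m : Fin (j + 1) → Fin (j + 1)} (hm : IsBlockMinMap m) :
    m = extendLast (initRestrict j.le_succ m) (m (Fin.last j)) := by
  funext i
  cases i using Fin.lastCases with
  | last => simp
  | cast i => simp only [extendLast_castSucc]; exact (castLE_initRestrict hm _ i).symm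

lemma fiber_initRestrict_eq_image {t : Fin j → Fin j} (ht : IsBlockMinMap t) :
    {m ∈ blockMinMaps (j + 1) | initRestrict j.le_succ m = t} =
      (newImages t).image (extendLast t) := by
  ext m
  simp only [mem_filter, mem_blockMinMaps, mem_image, newImages, mem_insert, mem_map,
    mem_fixedPts, Fin.coe_castSuccEmb]
  constructor
  · rintro ⟨hm : IsBlockMinMap m, rfl⟩
    refine ⟨m (Fin.last j), ?_, (eq_extendLast_initRestrict hm).symm⟩
    rcases Fin.eq_castSucc_or_eq_last (m (Fin.last j)) with ⟨w, hw⟩ | hw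
    · refine Or.inr ⟨w, Fin.castSucc_injective _ ?_, hw.symm⟩
      rw [← hw, ← (hm (Fin.last j)).2, hw]
      exact castLE_initRestrict hm _ w
    · exact Or.inl hw
  · rintro ⟨w, hw, rfl⟩
    refine ⟨fun i => ?_, initRestrict_extendLast ht w⟩
    cases i using Fin.lastCases with
    | last =>
      rcases hw with rfl | ⟨w, hw, rfl⟩
      · simp
      · simp [hw, (Fin.castSucc_lt_last w).le]
    | cast i => simp [(ht i).1, (ht i).2]

lemma sum_blockMinMaps_succ (g : ℕ → ℕ) :
    ∑ m ∈ blockMinMaps (j + 1), g #(fixedPts m) =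
      ∑ t ∈ blockMinMaps j, (g (#(fixedPts t) + 1) + #(fixedPts t) * g #(fixedPts t)) := by
  rw [← sum_fiberwise_of_maps_to (g := initRestrict j.le_succ) fun m hm =>
    mem_blockMinMaps.2 (isBlockMinMap_initRestrict (mem_blockMinMaps.1 hm) _)]
  refine sum_congr rfl fun t ht => ?_
  have hinj : Set.InjOn (extendLast t) (newImages t) := fun w _ w' _ h => by
    simpa using congrFun h (Fin.last j)
  rw [fiber_initRestrict_eq_image (mem_blockMinMaps.1 ht), sum_image hinj, newImages,
    sum_insert (by simp [Fin.castSucc_ne_last]), sum_map]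
  simp [card_fixedPts_extendLast, Fin.castSucc_ne_last]

lemma sum_blockMinMaps_eq_sum_stirlingSecond (j : ℕ) (g : ℕ → ℕ) :
    ∑ t ∈ blockMinMaps j, g #(fixedPts t) =
      ∑ k ∈ range (j + 1), Nat.stirlingSecond j k * g k := by
  induction j generalizing g with
  | zero => simp [blockMinMaps, fixedPts, IsBlockMinMap]
  | succ j ih =>
    have hshift : ∑ k ∈ range (j + 1), Nat.stirlingSecond j k * (k * g k) =
        ∑ k ∈ range (j + 1), (k + 1) * Nat.stirlingSecond j (k + 1) * g (k + 1) := by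
      rw [sum_range_succ', sum_range_succ, Nat.stirlingSecond_eq_zero_of_lt j.lt_succ_self]
      simp only [mul_zero, zero_mul, add_zero]
      exact sum_congr rfl fun k _ => by ring
    rw [sum_blockMinMaps_succ, sum_add_distrib, ih fun k => g (k + 1), ih fun k => k * g k, hshift,
      sum_range_succ' _ (j + 1), Nat.stirlingSecond_succ_zero, zero_mul, add_zero,
      ← sum_add_distrib]
    exact sum_congr rfl fun k _ => by rw [Nat.stirlingSecond_succ_succ]; ring

end Stirling

section LastBlock

variable {n : ℕ} (x : Fin n)

/-- The values allowed at `i` for a block-minimum map with last block `{x}` restricting to `t`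
below `x`: everything above `x` joins one of the blocks of `t`. -/
noncomputable def lastBlockFiber (t : Fin x → Fin x) (i : Fin n) : Finset (Fin n) :=
  if h : i < x then {(t ⟨i, h⟩).castLE x.isLt.le}
  else if i = x then {x}
  else (fixedPts t).map (Fin.castLEEmb x.isLt.le)

variable {x}

lemma mem_lastBlockFiber {m : Fin n → Fin n} (hm : IsBlockMinMap m)
    (hx : LastBlockSingletonAt m x) (i : Fin n) :
    m i ∈ lastBlockFiber x (initRestrict x.isLt.le m) i := by
  unfold lastBlockFiber
  split_ifs with hix hix'
  · exact mem_singleton.2 (castLE_initRestrict hm x.isLt.le ⟨i, hix⟩).symm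
  · exact mem_singleton.2 (hix' ▸ hx.1)
  · refine mem_map.2
      ⟨⟨m i, hx.2 i hix'⟩, mem_fixedPts.2 (Fin.castLE_injective x.isLt.le ?_), rfl⟩
    rw [castLE_initRestrict hm]
    exact (hm i).2

lemma of_forall_mem_lastBlockFiber {t : Fin x → Fin x} (ht : IsBlockMinMap t)
    {m : Fin n → Fin n} (hmem : ∀ i, m i ∈ lastBlockFiber x t i) :
    IsBlockMinMap m ∧ LastBlockSingletonAt m x ∧ initRestrict x.isLt.le m = t := by
  have hlow : ∀ y : Fin x, m (y.castLE x.isLt.le) = (t y).castLE x.isLt.le := fun y => by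
    simpa [lastBlockFiber, show y.castLE x.isLt.le < x from y.isLt] using hmem (y.castLE _)
  have hx : m x = x := by simpa [lastBlockFiber] using hmem x
  have hhigh : ∀ i, x < i → ∃ y, t y = y ∧ m i = y.castLE x.isLt.le := fun i hi => by
    simpa [lastBlockFiber, not_lt.2 hi.le, hi.ne', mem_fixedPts, eq_comm] using hmem i
  have hm : IsBlockMinMap m := fun i => by
    rcases lt_trichotomy i x with hi | rfl | hi
    · obtain ⟨y, rfl⟩ : ∃ y : Fin x, y.castLE x.isLt.le = i := ⟨⟨i, hi⟩, rfl⟩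
      rw [hlow, hlow, (ht y).2]
      exact ⟨(Fin.castLE_le_castLE_iff _).2 (ht y).1, rfl⟩
    · exact ⟨hx.le, by rw [hx, hx]⟩
    · obtain ⟨y, hy, hiy⟩ := hhigh i hi
      rw [hiy, hlow, hy]
      exact ⟨(show y.castLE x.isLt.le < x from y.isLt).le.trans hi.le, rfl⟩
  refine ⟨hm, ⟨hx, fun i hi => ?_⟩, funext fun y => Fin.castLE_injective x.isLt.le ?_⟩
  · rcases hi.lt_or_gt with hi | hi
    · obtain ⟨y, rfl⟩ : ∃ y : Fin x, y.castLE x.isLt.le = i := ⟨⟨i, hi⟩, rfl⟩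
      rw [hlow]
      exact (t y).isLt
    · obtain ⟨y, -, hiy⟩ := hhigh i hi
      rw [hiy]
      exact y.isLt
  · rw [castLE_initRestrict hm, hlow]

lemma fiber_initRestrict_eq_piFinset {t : Fin x → Fin x} (ht : IsBlockMinMap t) :
    {m ∈ blockMinMaps n | LastBlockSingletonAt m x ∧ initRestrict x.isLt.le m = t} =
      Fintype.piFinset (lastBlockFiber x t) := by
  ext m
  simp only [mem_filter, mem_blockMinMaps, Fintype.mem_piFinset]
  refine ⟨?_, of_forall_mem_lastBlockFiber ht⟩
  rintro ⟨hm, hx, rfl⟩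
  exact mem_lastBlockFiber hm hx

variable (x)

lemma card_lastBlockFiber (t : Fin x → Fin x) (i : Fin n) :
    #(lastBlockFiber x t i) = if x < i then #(fixedPts t) else 1 := by
  unfold lastBlockFiber
  rcases lt_trichotomy i x with h | rfl | h
  · simp [h, h.not_gt]
  · simp
  · simp [h, h.not_gt, h.ne']

lemma card_filter_lastBlockSingletonAt :
    #{m ∈ blockMinMaps n | LastBlockSingletonAt m x} =
      ∑ k ∈ range (x + 1), Nat.stirlingSecond x k * k ^ (n - 1 - x) := by
  rw [card_eq_sum_card_fiberwise (f := initRestrict x.isLt.le) (t := blockMinMaps x)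
    fun m hm => mem_blockMinMaps.2 <| isBlockMinMap_initRestrict
      (mem_blockMinMaps.1 (mem_filter.1 hm).1) _,
    ← sum_blockMinMaps_eq_sum_stirlingSecond]
  refine sum_congr rfl fun t ht => ?_
  rw [filter_filter, fiber_initRestrict_eq_piFinset (mem_blockMinMaps.1 ht),
    Fintype.card_piFinset]
  simp only [card_lastBlockFiber, prod_ite, prod_const, one_pow, mul_one,
    filter_lt_eq_Ioi, Fin.card_Ioi]

end LastBlock

lemma ncard_lastBlockSingleton_blockMinMaps (n : ℕ) :
    {m : Fin n → Fin n | IsBlockMinMap m ∧ ∃ x, LastBlockSingletonAt m x}.ncard =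
      ∑ x : Fin n, ∑ k ∈ range (x + 1), Nat.stirlingSecond x k * k ^ (n - 1 - x) := by
  have hunion : {m : Fin n → Fin n | IsBlockMinMap m ∧ ∃ x, LastBlockSingletonAt m x} =
      ↑(univ.biUnion fun x => {m ∈ blockMinMaps n | LastBlockSingletonAt m x}) := by
    ext m
    simp [mem_blockMinMaps]
  rw [hunion, Set.ncard_coe_finset, card_biUnion]
  · exact sum_congr rfl fun x _ => card_filter_lastBlockSingletonAt x
  · intro x _ y _ hxy
    simp only [Function.onFun, disjoint_left, mem_filter]
    exact fun m hx hy => hxy (hx.2.eq hy.2)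

section Partitions

variable {n : ℕ}

noncomputable def blockMin (P : Finpartition (univ : Finset (Fin n))) (a : Fin n) : Fin n :=
  (P.part a).min' (P.part_nonempty.2 (mem_univ a))

variable (P : Finpartition (univ : Finset (Fin n)))

lemma blockMin_mem_part (a : Fin n) : blockMin P a ∈ P.part a := min'_mem _ _

lemma blockMin_eq_of_part_eq {a b : Fin n} (h : P.part a = P.part b) :
    blockMin P a = blockMin P b := by
  unfold blockMin
  congr 1

lemma mem_part_iff_blockMin_eq {a b : Fin n} : b ∈ P.part a ↔ blockMin P b = blockMin P a := by
  refine ⟨fun hb => blockMin_eq_of_part_eq P ?_, fun h => ?_⟩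
  · exact P.part_eq_of_mem (P.part_mem.2 (mem_univ a)) hb
  · have hab : P.part b = P.part a := P.eq_of_mem_parts (P.part_mem.2 (mem_univ b))
      (P.part_mem.2 (mem_univ a)) (blockMin_mem_part P b) (h ▸ blockMin_mem_part P a)
    exact hab ▸ P.mem_part_self.2 (mem_univ b)

lemma isBlockMinMap_blockMin : IsBlockMinMap (blockMin P) := fun a =>
  ⟨min'_le _ _ (P.mem_part_self.2 (mem_univ a)),
    (mem_part_iff_blockMin_eq P).1 (blockMin_mem_part P a)⟩

lemma coe_blockMin (a : Fin n) : (blockMin P a : WithTop (Fin n)) = (P.part a).min :=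
  coe_min' _

lemma lastBlockSingleton_iff :
    LastBlockSingleton P ↔ ∃ x, LastBlockSingletonAt (blockMin P) x := by
  constructor
  · rintro ⟨B, hB, hcard, hmin⟩
    obtain ⟨x, rfl⟩ := card_eq_one.1 hcard
    have hpx : P.part x = {x} := P.part_eq_of_mem hB (mem_singleton_self x)
    refine ⟨x, mem_singleton.1 (hpx ▸ blockMin_mem_part P x), fun i hi => ?_⟩
    have hne : P.part i ≠ {x} := fun h =>
      hi (mem_singleton.1 (h ▸ P.mem_part_self.2 (mem_univ i)))
    have := hmin _ (P.part_mem.2 (mem_univ i)) hne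
    rwa [← coe_blockMin, min_singleton, WithTop.coe_lt_coe] at this
  · rintro ⟨x, hx, hlt⟩
    have hpx : P.part x = {x} := eq_singleton_iff_unique_mem.2
      ⟨P.mem_part_self.2 (mem_univ x), fun b hb => by
        by_contra hbx
        have := hlt b hbx
        rw [(mem_part_iff_blockMin_eq P).1 hb, hx] at this
        exact this.false⟩
    refine ⟨{x}, hpx ▸ P.part_mem.2 (mem_univ x), card_singleton x, fun B hB hne => ?_⟩
    obtain ⟨a, ha⟩ := P.nonempty_of_mem_parts hB
    have hax : a ≠ x := by rintro rfl; exact hne (hpx ▸ (P.part_eq_of_mem hB ha).symm)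
    rw [← P.part_eq_of_mem hB ha, ← coe_blockMin, min_singleton, WithTop.coe_lt_coe]
    exact hlt a hax

lemma blockMin_injective :
    Function.Injective (blockMin : Finpartition (univ : Finset (Fin n)) → Fin n → Fin n) := by
  intro P Q h
  have hpart : P.part = Q.part := funext fun a => by
    ext b
    rw [mem_part_iff_blockMin_eq, mem_part_iff_blockMin_eq, h]
  have hparts : ∀ R : Finpartition (univ : Finset (Fin n)), R.parts = univ.image R.part :=
    fun R => by
      ext B
      refine ⟨fun hB => ?_, fun hB => ?_⟩
      · obtain ⟨a, ha⟩ := R.nonempty_of_mem_parts hB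
        exact mem_image.2 ⟨a, mem_univ a, R.part_eq_of_mem hB ha⟩
      · obtain ⟨a, -, rfl⟩ := mem_image.1 hB
        exact R.part_mem.2 (mem_univ a)
  exact Finpartition.ext (by rw [hparts P, hparts Q, hpart])

lemma blockMin_ofSetoid_ker {m : Fin n → Fin n} (hm : IsBlockMinMap m) :
    blockMin (Finpartition.ofSetoid (Setoid.ker m)) = m := by
  funext a
  have hmem : ∀ b, b ∈ (Finpartition.ofSetoid (Setoid.ker m)).part a ↔ m a = m b := fun b =>
    Finpartition.mem_part_ofSetoid_iff_rel.trans Setoid.ker_def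
  refine le_antisymm (min'_le _ _ ((hmem _).2 (hm a).2.symm)) (le_min' _ _ _ fun b hb => ?_)
  exact ((hmem b).1 hb).trans_le (hm b).1

lemma card_lastBlockSingleton_eq_ncard (n : ℕ) :
    Nat.card {P : Finpartition (univ : Finset (Fin n)) // LastBlockSingleton P} =
      {m : Fin n → Fin n | IsBlockMinMap m ∧ ∃ x, LastBlockSingletonAt m x}.ncard := by
  refine (Nat.card_coe_set_eq {P | LastBlockSingleton P}).trans <|
    Set.ncard_congr (fun P _ => blockMin P) (fun P hP => ?_)
      (fun P Q _ _ h => blockMin_injective h) (fun m ⟨hm, hx⟩ => ?_)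
  · exact ⟨isBlockMinMap_blockMin P, (lastBlockSingleton_iff P).1 hP⟩
  · refine ⟨Finpartition.ofSetoid (Setoid.ker m), ?_, blockMin_ofSetoid_ker hm⟩
    show LastBlockSingleton _
    rw [lastBlockSingleton_iff, blockMin_ofSetoid_ker hm]
    exact hx

end Partitions

section Valleys

variable {n : ℕ} (π : Equiv.Perm (Fin n))

lemma isValley_iff {ℓ : Fin n} : IsValley π ℓ ↔
    ∃ i k : Fin n, ℓ.val = i.val + 1 ∧ k.val = ℓ.val + 1 ∧ π ℓ < π i ∧ π ℓ < π k := by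
  constructor
  · rintro ⟨h1, h2, hgt, hlt⟩
    exact ⟨_, _, by simp only; omega, rfl, hgt, hlt⟩
  · rintro ⟨i, k, hi, hk, h1, h2⟩
    have ei : (⟨ℓ.val - 1, by omega⟩ : Fin n) = i := Fin.ext (by simp only; omega)
    have ek : (⟨ℓ.val + 1, by omega⟩ : Fin n) = k := Fin.ext hk.symm
    refine ⟨by omega, by omega, ?_, ?_⟩
    · rwa [ei]
    · rwa [ek]

lemma desCount_eq_ncard :
    desCount π = {i : Fin n | ∃ j : Fin n, j.val = i.val + 1 ∧ π j < π i}.ncard := by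
  refine congrArg Set.ncard (Set.ext fun i => ⟨fun ⟨h, hd⟩ => ⟨_, rfl, hd⟩, ?_⟩)
  rintro ⟨j, hij, hd⟩
  exact ⟨by omega, by rwa [show (⟨i.val + 1, by omega⟩ : Fin n) = j from Fin.ext hij.symm]⟩

/-- `π` has no double descent and does not end with a descent. -/
def DescentsEndInValleys : Prop :=
  ∀ i j : Fin n, j.val = i.val + 1 → π j < π i → IsValley π j

lemma valCount_eq_desCount_iff : valCount π = desCount π ↔ DescentsEndInValleys π := by
  let pred : Fin n → Fin n := fun ℓ => ⟨ℓ.val - 1, by omega⟩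
  have hpred : ∀ ℓ, IsValley π ℓ → ∀ i, pred ℓ = i ↔ ℓ.val = i.val + 1 := fun ℓ hℓ i => by
    have := hℓ.1
    simp only [pred, Fin.ext_iff]
    omega
  have hsub :
      pred '' {ℓ | IsValley π ℓ} ⊆ {i | ∃ j : Fin n, j.val = i.val + 1 ∧ π j < π i} := by
    rintro _ ⟨ℓ, hℓ, rfl⟩
    obtain ⟨i, -, hi, -, h1, -⟩ := (isValley_iff π).1 hℓ
    exact ⟨ℓ, (hpred ℓ hℓ _).1 rfl, ((hpred ℓ hℓ i).2 hi).symm ▸ h1⟩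
  have hcard : (pred '' {ℓ | IsValley π ℓ}).ncard = valCount π :=
    Set.InjOn.ncard_image fun a ha b hb h => Fin.ext <| by
      have := (hpred a ha _).1 rfl
      have := (hpred b hb _).1 h.symm
      omega
  rw [desCount_eq_ncard, ← hcard]
  constructor
  · intro h i j hij hd
    have hi : i ∈ {i | ∃ j : Fin n, j.val = i.val + 1 ∧ π j < π i} := ⟨j, hij, hd⟩
    obtain ⟨ℓ, hℓ, hℓi⟩ := (Set.eq_of_subset_of_ncard_le hsub h.ge).symm ▸ hi
    obtain rfl : ℓ = j := Fin.ext (by have := (hpred ℓ hℓ i).1 hℓi; omega)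
    exact hℓ
  · intro h
    refine congrArg Set.ncard (Set.Subset.antisymm hsub ?_)
    rintro i ⟨j, hij, hd⟩
    exact ⟨j, h i j hij hd, (hpred j (h i j hij hd) i).2 hij⟩
variable {π}

lemma DescentsEndInValleys.le_or_exists_valley (hπ : DescentsEndInValleys π) {a b : Fin n}
    (hab : a ≤ b) : π a ≤ π b ∨ ∃ v, a < v ∧ v ≤ b ∧ IsValley π v ∧ π v ≤ π b := by
  obtain ⟨d, hd⟩ : ∃ d, b.val = a.val + d := ⟨b.val - a.val, by omega⟩
  induction d generalizing b with
  | zero => exact Or.inl (le_of_eq (congrArg π (Fin.ext hd.symm)))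
  | succ d ih =>
    let c : Fin n := ⟨a.val + d, by omega⟩
    have hcb : c < b := Fin.lt_def.2 (by simp only [c]; omega)
    rcases (π.injective.ne hcb.ne).lt_or_gt with h | h
    · rcases ih (b := c) (Fin.le_def.2 (by simp only [c]; omega)) rfl with
        h' | ⟨v, hav, hvc, hv, hvπ⟩
      · exact Or.inl (h'.trans h.le)
      · exact Or.inr ⟨v, hav, hvc.trans hcb.le, hv, hvπ.trans h.le⟩
    · refine Or.inr ⟨b, Fin.lt_def.2 (by omega), le_rfl, hπ c b ?_ h, le_rfl⟩
      simp only [c]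
      omega

lemma isRLMin_of_isValley (hinc : Increasing π) (hπ : DescentsEndInValleys π) {t : Fin n}
    (ht : IsValley π t) : IsRLMin π t := fun j htj => by
  rcases hπ.le_or_exists_valley htj.le with h | ⟨v, htv, -, hv, hvj⟩
  · exact h.lt_of_ne (π.injective.ne htj.ne)
  · exact (hinc t v ht hv htv).trans_le hvj

end Valleys

section BlockKey

variable {n : ℕ} (m : Fin n → Fin n)

/-- Lists the blocks of `m` by increasing minimum, each block as its other elements in increasing
order followed by its minimum. -/
def blockKey (v : Fin n) : ℕ :=
  (2 * (m v : ℕ) + if m v = v then 1 else 0) * n + v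

variable {m}

lemma blockKey_lt_of_lt {v w : Fin n} (h : m v < m w) : blockKey m v < blockKey m w := by
  have h' : (m v : ℕ) + 1 ≤ m w := h
  have hb : (if m v = v then 1 else 0) ≤ 1 := by split <;> omega
  unfold blockKey
  generalize (if m v = v then 1 else 0) = b at hb
  generalize (if m w = w then 1 else 0) = b'
  nlinarith [v.isLt, Nat.mul_le_mul_right n (show 2 * (m v : ℕ) + b ≤ 2 * m v + 1 by omega),
    Nat.mul_le_mul_right n (show 2 * (m v : ℕ) + 2 ≤ 2 * m w + b' by omega)]

lemma blockKey_lt_of_eq_self {v w : Fin n} (h : m v = m w) (hv : m v ≠ v) (hw : m w = w) :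
    blockKey m v < blockKey m w := by
  rw [blockKey, blockKey, if_neg hv, if_pos hw, h]
  nlinarith [v.isLt]

lemma blockKey_lt_of_ne_self {v w : Fin n} (h : m v = m w) (hv : m v ≠ v) (hw : m w ≠ w)
    (hvw : v < w) : blockKey m v < blockKey m w := by
  rw [blockKey, blockKey, if_neg hv, if_neg hw, h]
  exact Nat.add_lt_add_left (Fin.lt_def.1 hvw) _

variable (m) in
lemma blockKey_injective : Function.Injective (blockKey m) := fun v w h => by
  have := congrArg (· % n) h
  simp only [blockKey, Nat.mul_add_mod_self_right, Nat.mod_eq_of_lt v.isLt,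
    Nat.mod_eq_of_lt w.isLt] at this
  exact Fin.ext this

lemma le_of_blockKey_le {v w : Fin n} (h : blockKey m v ≤ blockKey m w) : m v ≤ m w :=
  not_lt.1 fun h' => (blockKey_lt_of_lt h').not_ge h

variable (m) in
noncomputable def sortByBlockKey : Equiv.Perm (Fin n) := Tuple.sort (blockKey m)

variable (m) in
lemma strictMono_blockKey_sortByBlockKey : StrictMono (blockKey m ∘ sortByBlockKey m) :=
  (Tuple.monotone_sort _).strictMono_of_injective ((blockKey_injective m).comp (Equiv.injective _))

lemma eq_sortByBlockKey {π : Equiv.Perm (Fin n)} (h : StrictMono (blockKey m ∘ π)) :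
    π = sortByBlockKey m :=
  Equiv.ext fun i => blockKey_injective m <|
    congrFun (Tuple.unique_monotone h.monotone (Tuple.monotone_sort _)) i

end BlockKey

section SuffixMin

variable {n : ℕ} (π : Equiv.Perm (Fin n))

/-- The blocks of this map are the segments of `π` ending at its right-to-left minima. -/
noncomputable def suffixMinMap (v : Fin n) : Fin n :=
  (Ici (π.symm v)).inf' nonempty_Ici π

lemma suffixMinMap_le {v j : Fin n} (hj : π.symm v ≤ j) : suffixMinMap π v ≤ π j :=
  inf'_le _ (mem_Ici.2 hj)

lemma le_suffixMinMap {v w : Fin n} (h : ∀ j, π.symm v ≤ j → w ≤ π j) :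
    w ≤ suffixMinMap π v :=
  le_inf' _ _ fun j hj => h j (mem_Ici.1 hj)

lemma exists_eq_suffixMinMap (v : Fin n) : ∃ q, π.symm v ≤ q ∧ π q = suffixMinMap π v := by
  obtain ⟨q, hq, h⟩ := exists_mem_eq_inf' nonempty_Ici π
  exact ⟨q, mem_Ici.1 hq, h.symm⟩

lemma suffixMinMap_apply_le_apply {i j : Fin n} (hij : i ≤ j) :
    suffixMinMap π (π i) ≤ suffixMinMap π (π j) := by
  simpa only [suffixMinMap, Equiv.symm_apply_apply] using inf'_mono π (Ici_subset_Ici.2 hij) _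

lemma isBlockMinMap_suffixMinMap : IsBlockMinMap (suffixMinMap π) := fun v => by
  have hle : ∀ w, suffixMinMap π w ≤ w := fun w => by
    simpa using suffixMinMap_le π (le_refl (π.symm w))
  refine ⟨hle v, le_antisymm (hle _) ?_⟩
  obtain ⟨q, hvq, hq⟩ := exists_eq_suffixMinMap π v
  obtain ⟨q', hqq', hq'⟩ := exists_eq_suffixMinMap π (suffixMinMap π v)
  rw [← hq, π.symm_apply_apply] at hqq'
  exact hq' ▸ suffixMinMap_le π (hvq.trans hqq')

variable {π}

lemma lastBlockSingletonAt_suffixMinMap (hπ : DescentsEndInValleys π) {z : Fin n}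
    (hz : z.val + 1 = n) : LastBlockSingletonAt (suffixMinMap π) (π z) := by
  have hmin := isBlockMinMap_suffixMinMap π
  refine ⟨le_antisymm (hmin _).1 (le_suffixMinMap π fun j hj => ?_), fun v hv => ?_⟩
  · rw [π.symm_apply_apply] at hj
    rw [show j = z from le_antisymm (Fin.le_def.2 (by omega)) hj]
  · have hvz : (π.symm v).val + 2 ≤ n := by
      have : π.symm v ≠ z := fun h => hv (by rw [← h, π.apply_symm_apply])
      have := Fin.val_ne_of_ne this
      omega
    let y : Fin n := ⟨n - 2, by omega⟩
    have hvy : π.symm v ≤ y := Fin.le_def.2 (by simp only [y]; omega)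
    refine (suffixMinMap_le π hvy).trans_lt ?_
    refine (π.injective.ne (Fin.ne_of_val_ne (by simp only [y]; omega))).lt_or_gt.resolve_right
      fun h => ?_
    obtain ⟨-, h2, -⟩ := hπ y z (by simp only [y]; omega) h
    omega

lemma strictMono_blockKey_suffixMinMap (hinc : Increasing π) (hπ : DescentsEndInValleys π) :
    StrictMono (blockKey (suffixMinMap π) ∘ π) := fun i j hij => by
  rcases (suffixMinMap_apply_le_apply π hij.le).lt_or_eq with hlt | heq
  · exact blockKey_lt_of_lt hlt
  obtain ⟨q, hjq, hq⟩ := exists_eq_suffixMinMap π (π j)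
  rw [π.symm_apply_apply] at hjq
  have hi : suffixMinMap π (π i) ≠ π i := by
    rw [heq, ← hq]
    exact π.injective.ne (hij.trans_le hjq).ne'
  rcases hjq.lt_or_eq with hjq | rfl
  · refine blockKey_lt_of_ne_self heq hi (by rw [← hq]; exact π.injective.ne hjq.ne') ?_
    rcases hπ.le_or_exists_valley hij.le with h | ⟨v, hiv, hvj, hv, -⟩
    · exact h.lt_of_ne (π.injective.ne hij.ne)
    · have hvq : π v < π q := isRLMin_of_isValley hinc hπ hv q (hvj.trans_lt hjq)
      have hqv : π q ≤ π v := by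
        rw [hq, ← heq]
        exact suffixMinMap_le π (by simpa using hiv.le)
      exact absurd hvq hqv.not_gt
  · exact blockKey_lt_of_eq_self heq hi hq.symm

lemma eq_sortByBlockKey_suffixMinMap (hinc : Increasing π) (hπ : DescentsEndInValleys π) :
    π = sortByBlockKey (suffixMinMap π) :=
  eq_sortByBlockKey (strictMono_blockKey_suffixMinMap hinc hπ)

end SuffixMin

section SortByBlockKey

variable {n : ℕ} {m : Fin n → Fin n}

lemma blockKey_sortByBlockKey_lt_iff {i j : Fin n} :
    blockKey m (sortByBlockKey m i) < blockKey m (sortByBlockKey m j) ↔ i < j :=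
  (strictMono_blockKey_sortByBlockKey m).lt_iff_lt

lemma blockKey_sortByBlockKey_le_iff {i j : Fin n} :
    blockKey m (sortByBlockKey m i) ≤ blockKey m (sortByBlockKey m j) ↔ i ≤ j :=
  (strictMono_blockKey_sortByBlockKey m).le_iff_le

lemma sortByBlockKey_eq_of_lastBlockSingletonAt {x z : Fin n} (hx : LastBlockSingletonAt m x)
    (hz : z.val + 1 = n) : sortByBlockKey m z = x := by
  by_contra hne
  obtain ⟨q, hq⟩ := (sortByBlockKey m).surjective x
  have : z < q := by
    rw [← blockKey_sortByBlockKey_lt_iff, hq]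
    exact blockKey_lt_of_lt (hx.1.symm ▸ hx.2 _ hne)
  have := Fin.lt_def.1 this
  omega

lemma blockKey_lt_blockKey_apply (hm : IsBlockMinMap m) {v : Fin n} (hv : m v ≠ v) :
    blockKey m v < blockKey m (m v) :=
  blockKey_lt_of_eq_self (hm v).2.symm hv (hm v).2

lemma blockKey_le_blockKey_apply (hm : IsBlockMinMap m) (v : Fin n) :
    blockKey m v ≤ blockKey m (m v) := by
  by_cases hv : m v = v
  · rw [hv]
  · exact (blockKey_lt_blockKey_apply hm hv).le

lemma lt_of_blockKey_lt (hm : IsBlockMinMap m) {w u : Fin n} (hw : m w = w)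
    (h : blockKey m w < blockKey m u) : w < u := by
  rcases (le_of_blockKey_le h.le).lt_or_eq with hlt | heq
  · exact hw ▸ hlt.trans_le (hm u).1
  · by_cases hu : m u = u
    · exact absurd h (by rw [show u = w by rw [← hu, ← heq, hw]]; exact lt_irrefl _)
    · exact absurd (blockKey_lt_of_eq_self heq.symm hu hw) h.not_gt

lemma sortByBlockKey_lt_iff (hm : IsBlockMinMap m) {i j : Fin n} (hij : j.val = i.val + 1) :
    sortByBlockKey m j < sortByBlockKey m i ↔ m (sortByBlockKey m i) = sortByBlockKey m j := by
  set v := sortByBlockKey m i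
  set w := sortByBlockKey m j
  have hvw : v ≠ w := (sortByBlockKey m).injective.ne (Fin.ne_of_val_ne (by omega))
  have hkey : blockKey m v < blockKey m w :=
    blockKey_sortByBlockKey_lt_iff.2 (Fin.lt_def.2 (by omega))
  have hgap : ∀ u, ¬(blockKey m v < blockKey m u ∧ blockKey m u < blockKey m w) := fun u h => by
    obtain ⟨p, rfl⟩ := (sortByBlockKey m).surjective u
    rw [blockKey_sortByBlockKey_lt_iff, blockKey_sortByBlockKey_lt_iff] at h
    have := Fin.lt_def.1 h.1
    have := Fin.lt_def.1 h.2
    omega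
  refine ⟨fun hwv => ?_, fun h => h ▸ ((hm v).1.lt_of_ne (h ▸ hvw.symm))⟩
  rcases (le_of_blockKey_le hkey.le).lt_or_eq with hlt | heq
  · by_cases hv : m v = v
    · exact absurd (hv ▸ hlt.trans_le (hm w).1) hwv.not_gt
    · refine absurd ⟨blockKey_lt_blockKey_apply hm hv, blockKey_lt_of_lt ?_⟩ (hgap (m v))
      rwa [(hm v).2]
  · by_cases hw : m w = w
    · rw [heq, hw]
    · by_cases hv : m v = v
      · exact absurd (hv ▸ heq ▸ (hm w).1) hwv.not_ge
      · exact absurd (blockKey_lt_of_ne_self heq.symm hw hv hwv) hkey.not_gt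

lemma increasing_sortByBlockKey (hm : IsBlockMinMap m) : Increasing (sortByBlockKey m) := by
  have hleader : ∀ t, IsValley (sortByBlockKey m) t →
      m (sortByBlockKey m t) = sortByBlockKey m t := by
    intro t ht
    obtain ⟨i, -, hti, -, hlt, -⟩ := (isValley_iff _).1 ht
    rw [← (sortByBlockKey_lt_iff hm hti).1 hlt, (hm _).2]
  intro t t' ht ht' htt'
  refine (lt_of_le_of_ne ?_ ((sortByBlockKey m).injective.ne htt'.ne))
  rw [← hleader t ht, ← hleader t' ht']
  exact le_of_blockKey_le (blockKey_sortByBlockKey_le_iff.2 htt'.le)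

lemma descentsEndInValleys_sortByBlockKey (hm : IsBlockMinMap m) {x : Fin n}
    (hx : LastBlockSingletonAt m x) :
    DescentsEndInValleys (sortByBlockKey m) := by
  intro i j hij hji
  set σ := sortByBlockKey m
  have hw : m (σ i) = σ j := (sortByBlockKey_lt_iff hm hij).1 hji
  have hwx : σ j ≠ x := by
    intro hjx
    have hix : σ i ≠ x := hjx ▸ σ.injective.ne (Fin.ne_of_val_ne (by omega))
    exact (hx.2 _ hix).ne (hw.trans hjx)
  have hk : j.val + 1 < n := by
    by_contra h
    exact hwx (sortByBlockKey_eq_of_lastBlockSingletonAt hx (by omega))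
  let k : Fin n := ⟨j.val + 1, hk⟩
  have hjk : σ j < σ k := lt_of_blockKey_lt hm (by rw [← hw, (hm _).2])
    (blockKey_sortByBlockKey_lt_iff.2 (Fin.lt_def.2 (by simp [k])))
  exact (isValley_iff σ).2 ⟨i, k, hij, rfl, hji, hjk⟩

lemma suffixMinMap_sortByBlockKey (hm : IsBlockMinMap m) : suffixMinMap (sortByBlockKey m) = m := by
  funext v
  set σ := sortByBlockKey m
  refine le_antisymm ?_ (le_suffixMinMap σ fun j hj => ?_)
  · obtain ⟨q, hq⟩ := σ.surjective (m v)
    refine hq ▸ suffixMinMap_le σ ?_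
    rw [← blockKey_sortByBlockKey_le_iff, hq, σ.apply_symm_apply]
    exact blockKey_le_blockKey_apply hm v
  · rw [← blockKey_sortByBlockKey_le_iff, σ.apply_symm_apply] at hj
    exact (le_of_blockKey_le hj).trans (hm _).1

end SortByBlockKey

lemma ncard_increasing_valCount_eq_desCount {n : ℕ} (hn : 0 < n) :
    {π : Equiv.Perm (Fin n) | Increasing π ∧ valCount π = desCount π}.ncard =
      {m : Fin n → Fin n | IsBlockMinMap m ∧ ∃ x, LastBlockSingletonAt m x}.ncard := by
  simp only [valCount_eq_desCount_iff]
  refine Set.ncard_congr (fun π _ => suffixMinMap π) (fun π ⟨_, hπ⟩ => ?_)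
    (fun π τ ⟨hπ₁, hπ₂⟩ ⟨hτ₁, hτ₂⟩ h => ?_) (fun m ⟨hm, x, hx⟩ => ?_)
  · exact ⟨isBlockMinMap_suffixMinMap π,
      _, lastBlockSingletonAt_suffixMinMap hπ (z := ⟨n - 1, by omega⟩) (by simp only; omega)⟩
  · rw [eq_sortByBlockKey_suffixMinMap hπ₁ hπ₂, eq_sortByBlockKey_suffixMinMap hτ₁ hτ₂]
    exact congrArg sortByBlockKey h
  · exact ⟨sortByBlockKey m, ⟨increasing_sortByBlockKey hm,
      descentsEndInValleys_sortByBlockKey hm hx⟩, suffixMinMap_sortByBlockKey hm⟩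

lemma stirling2_eq_stirlingSecond : stirling2 = Nat.stirlingSecond := by
  funext j k
  induction j generalizing k with
  | zero => cases k <;> rfl
  | succ j ih => cases k <;> simp [stirling2, Nat.stirlingSecond_succ_succ, ih]

theorem increasing_val_eq_des_count (n : ℕ) (hn : 1 ≤ n) :
    {π : Equiv.Perm (Fin n) | Increasing π ∧ valCount π = desCount π}.ncard =
      (∑ k ∈ Finset.range n, ∑ j ∈ Finset.Icc k (n - 1),
        stirling2 j k * k ^ (n - 1 - j)) ∧
    {π : Equiv.Perm (Fin n) | Increasing π ∧ valCount π = desCount π}.ncard =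
      Nat.card {P : Finpartition (Finset.univ : Finset (Fin n)) // LastBlockSingleton P} := by
  rw [ncard_increasing_valCount_eq_desCount hn, card_lastBlockSingleton_eq_ncard]
  refine ⟨?_, rfl⟩
  rw [ncard_lastBlockSingleton_blockMinMaps, stirling2_eq_stirlingSecond,
    Fin.sum_univ_eq_sum_range
      (fun j => ∑ k ∈ range (j + 1), Nat.stirlingSecond j k * k ^ (n - 1 - j))]
  exact sum_comm' fun j k => by simp only [mem_range, mem_Icc]; omega
end
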